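/- arXiv:1608.03740 — 9 statements merged into one kernel-verified Lean document; each statement's English description precedes it below -/
import Mathlib

section
/- For indeterminates x, y, z over ℚ and any natural number k, the identity ∑_{j=0}^{k} (x)_j (y)_j (-k)_j / ((z)_j (1+x+y-z-k)_j · j!) = (z-x)_k (z-y)_k / ((z)_k (z-x-y)_k) holds in the rational function field ℚ(x,y,z), where (x)_j denotes the Pochhammer symbol x(x+1)⋯(x+j-1) with (x)_0 = 1. -/
open Finset

/-- The field `ℚ(x,y,z)` of rational functions in three variables over `ℚ`. -/
noncomputable abbrev RatField3 : Type := FractionRing (MvPolynomial (Fin 3) ℚ)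

/-- Pochhammer symbol `(a)_j = a(a+1)⋯(a+j-1)`, with `(a)_0 = 1`. -/
noncomputable def poch (a : RatField3) (j : ℕ) : RatField3 :=
  ∏ i ∈ Finset.range j, (a + (i : RatField3))

noncomputable def xvar : RatField3 :=
  algebraMap (MvPolynomial (Fin 3) ℚ) RatField3 (MvPolynomial.X 0)
noncomputable def yvar : RatField3 :=
  algebraMap (MvPolynomial (Fin 3) ℚ) RatField3 (MvPolynomial.X 1)
noncomputable def zvar : RatField3 :=
  algebraMap (MvPolynomial (Fin 3) ℚ) RatField3 (MvPolynomial.X 2)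

/-!
Wilf–Zeilberger method. Let `T k j` be the `j`-th summand and
`ρ k = (c-a+k)(c-b+k) / ((c+k)(c-a-b+k))`, the ratio of consecutive right-hand sides. There is an
explicit `G k j`, a rational multiple of `T k (j-1)`, with
`T (k+1) j - ρ k * T k j = G k (j+1) - G k j`; expressing `T k (j+1)` and `T (k+1) (j+1)` as
rational multiples of `T k j` turns this into an identity of rational functions. Summed over
`j ≤ k+1` it telescopes, and the boundary terms vanish because `(-k)_{k+1} = 0`, so both sides
satisfy the same first-order recurrence in `k`.
-/

lemma ascPochhammer_succ_eval_left {S : Type*} [CommSemiring S] (n : ℕ) (x : S) {y : S}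
    (h : x + 1 = y) : (ascPochhammer S (n + 1)).eval x = x * (ascPochhammer S n).eval y := by
  simp [ascPochhammer_succ_left, Polynomial.eval_comp, h]

lemma MvPolynomial.algebraMap_ne_zero_of_eval_ne_zero {σ R K : Type*} [CommRing R] [CommRing K]
    [Algebra (MvPolynomial σ R) K] [IsFractionRing (MvPolynomial σ R) K] {p : MvPolynomial σ R}
    (v : σ → R) (h : p.eval v ≠ 0) : algebraMap (MvPolynomial σ R) K p ≠ 0 :=
  fun hp => h (by rw [IsFractionRing.to_map_eq_zero_iff.mp hp, map_zero])

section

variable {K : Type*} [Field K] (a b c : K)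

noncomputable def saalschutzTerm (k j : ℕ) : K :=
  (ascPochhammer K j).eval a * (ascPochhammer K j).eval b * (ascPochhammer K j).eval (-(k : K)) /
    ((ascPochhammer K j).eval c * (ascPochhammer K j).eval (1 + a + b - c - k) * j.factorial)

@[simp]
lemma saalschutzTerm_zero (k : ℕ) : saalschutzTerm a b c k 0 = 1 := by
  simp [saalschutzTerm]

lemma saalschutzTerm_succ (k i : ℕ) :
    saalschutzTerm a b c k (i + 1) = saalschutzTerm a b c k i *
      ((a + i) * (b + i) * (i - k) / ((c + i) * (1 + a + b - c - k + i) * (i + 1))) := by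
  simp only [saalschutzTerm, ascPochhammer_succ_eval, Nat.factorial_succ, div_mul_div_comm]
  push_cast
  ring_nf

lemma saalschutzTerm_succ_succ (k i : ℕ) :
    saalschutzTerm a b c (k + 1) (i + 1) = saalschutzTerm a b c k i *
      (-(k + 1) * (a + i) * (b + i) / ((c + i) * (a + b - c - k) * (i + 1))) := by
  have hk : -((k + 1 : ℕ) : K) + 1 = -k := by push_cast; ring
  have he : 1 + a + b - c - ((k + 1 : ℕ) : K) + 1 = 1 + a + b - c - k := by push_cast; ring
  rw [saalschutzTerm, ascPochhammer_succ_eval_left i _ hk, ascPochhammer_succ_eval_left i _ he]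
  simp only [saalschutzTerm, ascPochhammer_succ_eval, Nat.factorial_succ, div_mul_div_comm]
  push_cast
  ring_nf

lemma saalschutzTerm_eq_zero_of_lt {k j : ℕ} (h : k < j) : saalschutzTerm a b c k j = 0 := by
  simp [saalschutzTerm, ascPochhammer_eval_neg_coe_nat_of_lt h]

-- The `G` above, found by Gosper's algorithm applied to `T (k+1) j - ρ k * T k j` in `j`.
noncomputable def saalschutzPartner (k : ℕ) : ℕ → K
  | 0 => 0
  | i + 1 => saalschutzTerm a b c k i *
      (((c - 1) * (c - a - b + k) - (i + 1) * (i + a + b - k)) * (a + i) * (b + i) /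
        ((c + k) * (c - a - b + k) * (c + i) * (1 + a + b - c - k + i)))

variable [CharZero K] {a b c}

lemma saalschutzTerm_succ_sub (hc : ∀ n : ℕ, c + n ≠ 0) (hd : ∀ n : ℤ, c - a - b + n ≠ 0)
    (k j : ℕ) :
    saalschutzTerm a b c (k + 1) j -
        (c - a + k) * (c - b + k) / ((c + k) * (c - a - b + k)) * saalschutzTerm a b c k j =
      saalschutzPartner a b c k (j + 1) - saalschutzPartner a b c k j := by
  have he (n : ℤ) : 1 + a + b - c - k + n ≠ 0 := fun h =>
    hd (k - 1 - n) (by push_cast; linear_combination -h)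
  have hck : c + k ≠ 0 := hc k
  have hdk : c - a - b + k ≠ 0 := by exact_mod_cast hd k
  cases j with
  | zero =>
    have hc0 : c ≠ 0 := by simpa using hc 0
    have he0 : 1 + a + b - c - k ≠ 0 := by simpa using he 0
    simp only [saalschutzPartner, saalschutzTerm_zero, CharP.cast_eq_zero, add_zero, zero_add]
    field_simp
    ring
  | succ i =>
    have hci : c + i ≠ 0 := hc i
    have hci' : c + (i + 1) ≠ 0 := by exact_mod_cast hc (i + 1)
    have hei : 1 + a + b - c - k + i ≠ 0 := by exact_mod_cast he i
    have hei' : 1 + a + b - c - k + (i + 1) ≠ 0 := by exact_mod_cast he (i + 1)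
    have hk1 : a + b - c - k ≠ 0 := fun h => he (-1) (by push_cast; linear_combination h)
    have hi : (i : K) + 1 ≠ 0 := by exact_mod_cast i.succ_ne_zero
    rw [saalschutzTerm_succ_succ, saalschutzTerm_succ, saalschutzPartner, saalschutzPartner,
      saalschutzTerm_succ]
    push_cast
    field_simp
    ring

lemma sum_range_saalschutzTerm_succ (hc : ∀ n : ℕ, c + n ≠ 0)
    (hd : ∀ n : ℤ, c - a - b + n ≠ 0) (k : ℕ) :
    ∑ j ∈ range (k + 2), saalschutzTerm a b c (k + 1) j =
      (c - a + k) * (c - b + k) / ((c + k) * (c - a - b + k)) *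
        ∑ j ∈ range (k + 1), saalschutzTerm a b c k j := by
  have hpartner : saalschutzPartner a b c k (k + 2) = 0 := by
    simp [saalschutzPartner, saalschutzTerm_eq_zero_of_lt]
  calc ∑ j ∈ range (k + 2), saalschutzTerm a b c (k + 1) j
      = ∑ j ∈ range (k + 2), ((c - a + k) * (c - b + k) / ((c + k) * (c - a - b + k)) *
          saalschutzTerm a b c k j +
          (saalschutzPartner a b c k (j + 1) - saalschutzPartner a b c k j)) :=
        sum_congr rfl fun j _ => by rw [← saalschutzTerm_succ_sub hc hd]; ring
    _ = (c - a + k) * (c - b + k) / ((c + k) * (c - a - b + k)) *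
          ∑ j ∈ range (k + 1), saalschutzTerm a b c k j := by
        rw [sum_add_distrib, sum_range_sub, hpartner, ← mul_sum, sum_range_succ _ (k + 1),
          saalschutzTerm_eq_zero_of_lt a b c (lt_add_one k)]
        simp [saalschutzPartner]

theorem sum_range_saalschutzTerm (hc : ∀ n : ℕ, c + n ≠ 0)
    (hd : ∀ n : ℤ, c - a - b + n ≠ 0) (k : ℕ) :
    ∑ j ∈ range (k + 1), saalschutzTerm a b c k j =
      (ascPochhammer K k).eval (c - a) * (ascPochhammer K k).eval (c - b) /
        ((ascPochhammer K k).eval c * (ascPochhammer K k).eval (c - a - b)) := by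
  induction k with
  | zero => simp
  | succ k ih =>
    rw [sum_range_saalschutzTerm_succ hc hd, ih]
    simp only [ascPochhammer_succ_eval, div_mul_div_comm]
    congr 1 <;> ring

end

lemma poch_eq_ascPochhammer_eval (a : RatField3) (j : ℕ) : poch a j = (ascPochhammer RatField3 j).eval a := by
  induction j with
  | zero => simp [poch]
  | succ j ih => rw [poch, prod_range_succ, ← poch, ih, ascPochhammer_succ_eval]

lemma zvar_add_natCast_ne_zero (n : ℕ) : zvar + n ≠ 0 := by
  have : zvar + n = algebraMap (MvPolynomial (Fin 3) ℚ) RatField3 (.X 2 + n) := by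
    simp [zvar]
  rw [this]
  exact MvPolynomial.algebraMap_ne_zero_of_eval_ne_zero ![0, 0, 1 - n] (by simp)

lemma zvar_sub_xvar_sub_yvar_add_intCast_ne_zero (n : ℤ) : zvar - xvar - yvar + n ≠ 0 := by
  have : zvar - xvar - yvar + n =
      algebraMap (MvPolynomial (Fin 3) ℚ) RatField3 (.X 2 - .X 0 - .X 1 + n) := by
    simp [xvar, yvar, zvar]
  rw [this]
  exact MvPolynomial.algebraMap_ne_zero_of_eval_ne_zero ![0, 0, 1 - n] (by simp)

/-- **The Pfaff–Saalschütz identity** in `ℚ(x,y,z)`. -/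
theorem pfaff_saalschutz (k : ℕ) :
    ∑ j ∈ Finset.range (k + 1),
        poch xvar j * poch yvar j * poch (-(k : RatField3)) j /
          (poch zvar j * poch (1 + xvar + yvar - zvar - (k : RatField3)) j *
            (j.factorial : RatField3)) =
      poch (zvar - xvar) k * poch (zvar - yvar) k /
        (poch zvar k * poch (zvar - xvar - yvar) k) := by
  simp only [poch_eq_ascPochhammer_eval]
  exact sum_range_saalschutzTerm zvar_add_natCast_ne_zero
    zvar_sub_xvar_sub_yvar_add_intCast_ne_zero k
end

section
/- Let m, n, d, i be natural numbers with 0 < d < min(m,n), n ≥ 2d, and i ≥ 1. Then ∑_{j=0}^{d} C(m+n-2d-1, m-j-i) · (-1)^j · C(d,j)·C(n-d+j-1, j) / C(m-1, j) = C(i-1, d) · C(m+n-d-1, m-i) / C(m-1, d), where binomial coefficients C(a,b) with b < 0 or b > a are zero. -/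
/-!
Write `m = a + d + 1`, `n = b + d + 1`, `k = m - i` and clear the denominator with
`C(d, j) C(a + d, d) = C(a + d, j) C(a + d - j, d - j)`.
Since `(-1)^j C(b + j, j) = C(-(b + 1), j)`, the claim becomes the case `p = b + 1` of
`∑_j C(a + p, k - j) C(-p, j) C(a + d - j, d - j) = C(a + d - k, d) C(a + p + d, k)`,
with generalized binomials in the upper index. Pascal's rule, applied to each of the three factors,
expresses the case `(p + 1, d + 1)` through the cases `(p, d + 1)` and `(p + 1, d)`. So by induction
it remains to check `d = 0`, which is trivial, and `p = 0`, where `C(0, j) = δ_{j0}` leaves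
`C(a, k) C(a + d, d) = C(a + d - k, d) C(a + d, k)`.
-/

open Finset

/-- Binomial coefficient `C(c, k)` with integer lower index, zero when `k < 0`
(and automatically zero when `k > c`), as a rational number. -/
def binomQ (c : ℕ) (k : ℤ) : ℚ := if 0 ≤ k then (c.choose k.toNat : ℚ) else 0

@[simp]
lemma binomQ_negSucc (c t : ℕ) : binomQ c (Int.negSucc t) = 0 := by
  simp [binomQ]

@[simp]
lemma binomQ_natCast (c t : ℕ) : binomQ c t = c.choose t := by
  simp [binomQ]

lemma binomQ_succ (c : ℕ) (k : ℤ) : binomQ (c + 1) k = binomQ c k + binomQ c (k - 1) := by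
  obtain (_ | t) | t := k
  · rw [show Int.ofNat 0 - 1 = Int.negSucc 0 from rfl, binomQ_negSucc, add_zero]
    simp [binomQ]
  · rw [Int.ofNat_eq_natCast, show ((t + 1 : ℕ) : ℤ) - 1 = t by omega, binomQ_natCast,
      binomQ_natCast, binomQ_natCast, Nat.choose_succ_succ', Nat.cast_add, add_comm]
  · simp [show Int.negSucc t - 1 = Int.negSucc (t + 1) by omega]

lemma Ring.choose_neg_natCast_add_one (b j : ℕ) :
    Ring.choose (-((b : ℚ) + 1)) j = (-1) ^ j * (b + j).choose j := by
  rw [Ring.choose_neg, show (b : ℚ) + 1 + j - 1 = ((b + j : ℕ) : ℚ) by push_cast; ring,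
    Ring.choose_natCast, Units.smul_def, zsmul_eq_mul, Int.cast_negOnePow]
  norm_cast

lemma Nat.choose_mul_add_choose (a d t : ℕ) :
    a.choose t * (a + d).choose d = (a + d - t).choose d * (a + d).choose t := by
  rcases le_or_gt t a with hta | hat
  · have := Nat.choose_mul (n := a + d) (k := a) hta
    rw [Nat.choose_symm_add, show a + d - t = a - t + d by omega, Nat.choose_symm_add] at this
    rw [show a + d - t = a - t + d by omega, mul_comm, this, mul_comm]
  · rw [Nat.choose_eq_zero_of_lt hat, zero_mul]
    rcases le_or_gt t (a + d) with htd | htd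
    · rw [Nat.choose_eq_zero_of_lt (show a + d - t < d by omega), zero_mul]
    · rw [Nat.choose_eq_zero_of_lt htd, mul_zero]

lemma binomQ_mul_choose_add (a d : ℕ) (k : ℤ) :
    binomQ a k * (a + d).choose d = Ring.choose ((a + d : ℚ) - k) d * binomQ (a + d) k := by
  obtain t | t := k
  · rcases le_or_gt t (a + d) with htd | htd
    · rw [Int.ofNat_eq_natCast, Int.cast_natCast,
        show (a + d : ℚ) - t = ((a + d - t : ℕ) : ℚ) by push_cast [htd]; ring,
        Ring.choose_natCast, binomQ_natCast, binomQ_natCast]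
      exact_mod_cast Nat.choose_mul_add_choose a d t
    · simp [Nat.choose_eq_zero_of_lt htd, Nat.choose_eq_zero_of_lt (show a < t by omega)]
  · simp

noncomputable def saalschutzSum (a p d : ℕ) (k : ℤ) : ℚ :=
  ∑ j ∈ range (d + 1),
    binomQ (a + p) (k - j) * Ring.choose (-(p : ℚ)) j * (a + d - j).choose (d - j)

lemma saalschutzSum_zero_right (a p : ℕ) (k : ℤ) : saalschutzSum a p 0 k = binomQ (a + p) k := by
  simp [saalschutzSum]

lemma saalschutzSum_zero_middle (a d : ℕ) (k : ℤ) :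
    saalschutzSum a 0 d k = binomQ a k * (a + d).choose d := by
  rw [saalschutzSum, sum_eq_single 0]
  · simp
  · intro j _ hj
    simp [Ring.choose_zero_pos ℚ (Nat.pos_of_ne_zero hj)]
  · simp

lemma saalschutzSum_succ_succ (a p d : ℕ) (k : ℤ) :
    saalschutzSum a (p + 1) (d + 1) k =
      saalschutzSum a p (d + 1) k + saalschutzSum a p (d + 1) (k - 1) -
        saalschutzSum a (p + 1) d (k - 1) := by
  have hw (j : ℕ) : Ring.choose (-((p + 1 : ℕ) : ℚ)) (j + 1) =
      Ring.choose (-(p : ℚ)) (j + 1) - Ring.choose (-((p + 1 : ℕ) : ℚ)) j := by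
    have := Ring.choose_succ_succ (-((p + 1 : ℕ) : ℚ)) j
    rw [show -((p + 1 : ℕ) : ℚ) + 1 = -(p : ℚ) by push_cast; ring] at this
    linarith
  have hterm (j : ℕ) :
      binomQ (a + (p + 1)) (k - (j + 1 : ℕ)) * Ring.choose (-((p + 1 : ℕ) : ℚ)) (j + 1) *
          (a + (d + 1) - (j + 1)).choose (d + 1 - (j + 1)) =
      binomQ (a + p) (k - (j + 1 : ℕ)) * Ring.choose (-(p : ℚ)) (j + 1) *
          (a + (d + 1) - (j + 1)).choose (d + 1 - (j + 1)) +
        binomQ (a + p) (k - 1 - (j + 1 : ℕ)) * Ring.choose (-(p : ℚ)) (j + 1) *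
          (a + (d + 1) - (j + 1)).choose (d + 1 - (j + 1)) -
        binomQ (a + (p + 1)) (k - 1 - j) * Ring.choose (-((p + 1 : ℕ) : ℚ)) j *
          (a + d - j).choose (d - j) := by
    rw [hw, show a + (d + 1) - (j + 1) = a + d - j by omega, Nat.add_sub_add_right,
      show k - (j + 1 : ℕ) = k - 1 - j by push_cast; ring,
      show k - 1 - (j + 1 : ℕ) = k - 1 - j - 1 by push_cast; ring,
      show a + (p + 1) = a + p + 1 from rfl, binomQ_succ]
    ring
  simp only [saalschutzSum, sum_range_succ' _ (d + 1), sum_congr rfl fun j _ => hterm j,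
    sum_add_distrib, sum_sub_distrib]
  rw [show a + (p + 1) = a + p + 1 from rfl, binomQ_succ]
  simp only [Nat.cast_zero, sub_zero, Ring.choose_zero_right, mul_one, Nat.sub_zero]
  ring

theorem saalschutzSum_eq (a p d : ℕ) (k : ℤ) :
    saalschutzSum a p d k = Ring.choose ((a + d : ℚ) - k) d * binomQ (a + p + d) k := by
  induction p generalizing d k with
  | zero => rw [saalschutzSum_zero_middle, binomQ_mul_choose_add, add_zero]
  | succ p ihp =>
    induction d generalizing k with
    | zero => simp [saalschutzSum_zero_right]
    | succ d ihd =>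
      rw [saalschutzSum_succ_succ, ihp, ihp, ihd,
        show a + (p + 1) + (d + 1) = a + p + (d + 1) + 1 by ring, binomQ_succ,
        show a + (p + 1) + d = a + p + (d + 1) by ring]
      have := Ring.choose_succ_succ ((a + (d + 1 : ℕ) : ℚ) - k) d
      push_cast at this ⊢
      rw [show (a : ℚ) + (d + 1) - (k - 1) = a + (d + 1) - k + 1 by ring, this,
        show (a : ℚ) + d - (k - 1) = a + (d + 1) - k by ring]
      ring

lemma Nat.cast_choose_div_choose_mul_choose {a d j : ℕ} (hj : j ≤ d) :
    (d.choose j : ℚ) / (a + d).choose j * (a + d).choose d = (a + d - j).choose (d - j) := by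
  have hpos : ((a + d).choose j : ℚ) ≠ 0 := by
    exact_mod_cast (Nat.choose_pos (by omega)).ne'
  rw [div_mul_eq_mul_div, div_eq_iff hpos, mul_comm]
  exact_mod_cast (Nat.choose_mul hj).trans (mul_comm _ _)

theorem binomial_pfaff_saalschutz_general (m n d i : ℕ) (hdm : d < m) (hdn : d < n)
    (hi : 1 ≤ i) :
    ∑ j ∈ Finset.range (d + 1),
        binomQ (m + n - 2 * d - 1) ((m : ℤ) - j - i) * (-1) ^ j *
          ((d.choose j : ℚ) * ((n - d + j - 1).choose j : ℚ) / ((m - 1).choose j : ℚ)) =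
      ((i - 1).choose d : ℚ) * binomQ (m + n - d - 1) ((m : ℤ) - i) /
        ((m - 1).choose d : ℚ) := by
  obtain ⟨a, rfl⟩ : ∃ a, m = a + d + 1 := ⟨m - d - 1, by omega⟩
  obtain ⟨b, rfl⟩ : ∃ b, n = b + d + 1 := ⟨n - d - 1, by omega⟩
  have hCd : ((a + d).choose d : ℚ) ≠ 0 := by
    exact_mod_cast (Nat.choose_pos (Nat.le_add_left d a)).ne'
  rw [show a + d + 1 + (b + d + 1) - 2 * d - 1 = a + (b + 1) by omega,
    show a + d + 1 + (b + d + 1) - d - 1 = a + (b + 1) + d by omega, Nat.add_sub_cancel,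
    eq_div_iff hCd, sum_mul]
  have hterm (j : ℕ) (hj : j ∈ range (d + 1)) :
      binomQ (a + (b + 1)) ((a + d + 1 : ℕ) - j - i) * (-1) ^ j *
          ((d.choose j : ℚ) * ((b + d + 1 - d + j - 1).choose j : ℚ) / ((a + d).choose j : ℚ)) *
          (a + d).choose d =
        binomQ (a + (b + 1)) (((a + d + 1 : ℕ) - i : ℤ) - j) *
          Ring.choose (-((b + 1 : ℕ) : ℚ)) j * (a + d - j).choose (d - j) := by
    rw [← Nat.cast_choose_div_choose_mul_choose (a := a) (Nat.lt_succ_iff.mp (mem_range.mp hj)),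
      Nat.cast_add_one (R := ℚ), Ring.choose_neg_natCast_add_one,
      show b + d + 1 - d + j - 1 = b + j by omega, sub_right_comm]
    ring
  rw [sum_congr rfl hterm, ← saalschutzSum, saalschutzSum_eq,
    show (a + d : ℚ) - ((a + d + 1 : ℕ) - i : ℤ) = ((i - 1 : ℕ) : ℚ) by push_cast [hi]; ring,
    Ring.choose_natCast]

/-- The binomial identity equivalent to the Pfaff–Saalschütz identity. -/
theorem binomial_pfaff_saalschutz (m n d i : ℕ) (hd : 0 < d) (hdm : d < m) (hdn : d < n)
    (hn : 2 * d ≤ n) (hi : 1 ≤ i) :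
    ∑ j ∈ Finset.range (d + 1),
        binomQ (m + n - 2 * d - 1) ((m : ℤ) - j - i) * (-1) ^ j *
          ((d.choose j : ℚ) * ((n - d + j - 1).choose j : ℚ) / ((m - 1).choose j : ℚ)) =
      ((i - 1).choose d : ℚ) * binomQ (m + n - d - 1) ((m : ℤ) - i) /
        ((m - 1).choose d : ℚ) :=
  binomial_pfaff_saalschutz_general m n d i hdm hdn hi
end

section
/- Let m, n, d be natural numbers with 0 < d < min(m,n), and set c = m+n-2d-1. Let H(m,n,d) be the d×(d+1) matrix with entries C(c, m-i-j) for 1 ≤ i ≤ d, 0 ≤ j ≤ d, and let q_0(m,n,d) be the determinant of the square submatrix obtained by deleting the first column (columns j=1,...,d). Then q_0(m,n,d) = (-1)^(d(d-1)/2) · ∏_{i=1}^{d} ((i-1)! (c+i-1)!) / ((m-i-1)! (n-i)!). -/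
open Finset

/-- Binomial coefficient `C(c, k)` with integer lower index, zero when `k < 0`
(and automatically zero when `k > c`). -/
def binomZ (c : ℕ) (k : ℤ) : ℤ := if 0 ≤ k then (c.choose k.toNat : ℤ) else 0

/-- The `d × (d+1)` binomial Hankel matrix `H(m,n,d)` with entries
`C(m+n-2d-1, m-i-j)` for `1 ≤ i ≤ d`, `0 ≤ j ≤ d`. -/
def hankelH (m n d : ℕ) : Matrix (Fin d) (Fin (d + 1)) ℤ :=
  Matrix.of fun i j => binomZ (m + n - 2 * d - 1) ((m : ℤ) - ((i : ℕ) + 1) - (j : ℕ))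

/-- `q_j(m,n,d)`: the maximal minor of `H(m,n,d)` obtained by deleting the
`(j+1)`-th column (columns are indexed `0,…,d`). -/
def qMinor (m n d : ℕ) (j : Fin (d + 1)) : ℤ :=
  ((hankelH m n d).submatrix id j.succAbove).det

/-!
Reversing the columns turns the Hankel minor `q₀` into the Toeplitz determinant
`T_d(a) = det [C(c, a + j - i)]` with `a = m - d - 1`, at the cost of the sign
`(-1)^(d(d-1)/2)` of the reversal. Since the first and last rows and columns of `T_{d+2}(a)`
cut out Toeplitz matrices again, the Desnanot–Jacobi identity gives
`T_{d+2}(a) T_d(a) = T_{d+1}(a)² - T_{d+1}(a+1) T_{d+1}(a-1)`.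
MacMahon's product `∏ i!(a+e+i)!/((a+i)!(e+i)!)` (with `a + e = c`) obeys the same recurrence,
agrees with `T` for `d ≤ 1`, and is `1` when `a = 0` or `e = 0`, where the Toeplitz matrix is
unitriangular; so the two agree for all `d`.
-/

open scoped Nat

namespace Matrix

variable {R : Type*} [CommRing R]

section Jacobi

variable {ι : Type*} [Fintype ι] [DecidableEq ι]

theorem sum_smul_updateRow (M : Matrix ι ι R) (j : ι) (c v : ι → R) :
    ∑ k, c k • M.updateRow j v k = ∑ k, c k • M k + -c j • M j + c j • v := by
  rw [← add_sum_erase _ _ (mem_univ j), ← add_sum_erase _ _ (mem_univ j),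
    sum_congr rfl fun k hk => by rw [updateRow_ne (ne_of_mem_erase hk)], updateRow_self]
  module

theorem det_updateRow_updateRow_self_swap (M : Matrix ι ι R) {i j : ι} (hij : i ≠ j)
    (v : ι → R) : ((M.updateRow j v).updateRow i (M j)).det = -(M.updateRow i v).det := by
  have hswap : (M.updateRow j v).updateRow i (M j) =
      (M.updateRow i v).submatrix (Equiv.swap i j) id := by
    ext k l
    rcases eq_or_ne k i with rfl | hki
    · simp [hij.symm]
    rcases eq_or_ne k j with rfl | hkj
    · simp [hki]
    · simp [hki, hkj, Equiv.swap_apply_of_ne_of_ne]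
  rw [hswap, det_permute, Equiv.Perm.sign_swap hij]
  simp

/-- Jacobi's identity for the `2 × 2` minors of the adjugate. -/
theorem det_mul_det_updateRow_single_updateRow_single (M : Matrix ι ι R) {i j : ι}
    (hij : i ≠ j) :
    M.det * ((M.updateRow j (Pi.single j 1)).updateRow i (Pi.single i 1)).det =
      adjugate M i i * adjugate M j j - adjugate M i j * adjugate M j i := by
  set P := M.updateRow j (Pi.single j 1)
  have hrow : ∑ k, adjugate M i k • M k = M.det • Pi.single i 1 := by
    ext l
    simpa [mul_apply, sum_apply, Pi.single_apply, one_apply, eq_comm] using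
      congrFun (congrFun (adjugate_mul M) i) l
  have key := det_updateRow_sum P i (adjugate M i)
  rw [sum_smul_updateRow, hrow, det_updateRow_add, det_updateRow_add, det_updateRow_smul,
    det_updateRow_smul, det_updateRow_smul, det_updateRow_updateRow_self_swap M hij,
    det_zero_of_row_eq hij (by simp [P, hij.symm] : P.updateRow i (Pi.single j 1) i = _),
    ← adjugate_apply M j i, ← adjugate_apply M j j] at key
  linear_combination key

end Jacobi

theorem desnanot_jacobi {n : ℕ} (M : Matrix (Fin (n + 2)) (Fin (n + 2)) R) :
    M.det * (M.submatrix (Fin.succ ∘ Fin.castSucc) (Fin.succ ∘ Fin.castSucc)).det =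
      (M.submatrix Fin.succ Fin.succ).det * (M.submatrix Fin.castSucc Fin.castSucc).det -
        (M.submatrix Fin.castSucc Fin.succ).det * (M.submatrix Fin.succ Fin.castSucc).det := by
  have hinner : (M.updateRow (Fin.last (n + 1)) (Pi.single (Fin.last (n + 1)) 1)).submatrix
      Fin.succ Fin.succ =
      (M.submatrix Fin.succ Fin.succ).updateRow (Fin.last n) (Pi.single (Fin.last n) 1) := by
    ext k l
    simp [updateRow_apply, ← Fin.succ_last, Pi.single_apply]
  have h := det_mul_det_updateRow_single_updateRow_single M (Fin.last_pos.ne : (0 : Fin (n + 2)) ≠ _)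
  rw [← adjugate_apply, adjugate_fin_succ_eq_det_submatrix, Fin.succAbove_zero, hinner,
    ← adjugate_apply] at h
  simp only [adjugate_fin_succ_eq_det_submatrix, Fin.succAbove_zero, Fin.succAbove_last,
    submatrix_submatrix, Fin.val_zero, Fin.val_last, add_zero, zero_add, ← two_mul, pow_mul,
    neg_one_sq, one_pow, one_mul] at h
  have hsign : ((-1 : R) ^ (n + 1)) ^ 2 = 1 := by rw [← pow_mul, pow_mul', neg_one_sq, one_pow]
  linear_combination h -
    (M.submatrix Fin.castSucc Fin.succ).det * (M.submatrix Fin.succ Fin.castSucc).det * hsign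

end Matrix

theorem Fin.sign_revPerm (d : ℕ) :
    Equiv.Perm.sign (Fin.revPerm : Equiv.Perm (Fin d)) = (-1) ^ (d * (d - 1) / 2) := by
  rw [Equiv.Perm.sign_eq_prod_prod_Iio]
  calc ∏ j : Fin d, ∏ i ∈ Iio j, (if Fin.revPerm i < Fin.revPerm j then 1 else -1)
      _ = ∏ j : Fin d, (-1 : ℤˣ) ^ (j : ℕ) := by
        refine prod_congr rfl fun j _ => ?_
        rw [prod_congr rfl fun i hi => if_neg ?_, Finset.prod_const, Fin.card_Iio]
        simpa [Fin.rev_lt_rev] using (mem_Iio.1 hi).le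
      _ = (-1) ^ (d * (d - 1) / 2) := by
        rw [prod_pow_eq_pow_sum, Fin.sum_univ_eq_sum_range (fun j => j), sum_range_id]

theorem binomZ_of_neg {c : ℕ} {k : ℤ} (hk : k < 0) : binomZ c k = 0 := if_neg hk.not_ge

theorem binomZ_of_lt {c : ℕ} {k : ℤ} (hk : (c : ℤ) < k) : binomZ c k = 0 := by
  rw [binomZ, if_pos (by omega), Nat.choose_eq_zero_of_lt (by omega), Nat.cast_zero]

theorem binomZ_natCast (c k : ℕ) : binomZ c k = c.choose k := by
  simp [binomZ]

def binomToeplitz (c : ℕ) (a : ℤ) (d : ℕ) : Matrix (Fin d) (Fin d) ℤ :=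
  Matrix.of fun i j => binomZ c (a + j - i)

theorem binomToeplitz_submatrix {c d d' : ℕ} (a : ℤ) (f g : Fin d → Fin d') (r s : ℕ)
    (hf : ∀ i, (f i : ℕ) = i + r) (hg : ∀ j, (g j : ℕ) = j + s) :
    (binomToeplitz c a d').submatrix f g = binomToeplitz c (a + s - r) d := by
  ext i j
  simp only [binomToeplitz, Matrix.submatrix_apply, Matrix.of_apply, hf, hg]
  congr 1
  push_cast
  ring

theorem det_binomToeplitz_zero (c d : ℕ) : (binomToeplitz c 0 d).det = 1 := by
  rw [Matrix.det_of_isUpperTriangular]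
  · simp [binomToeplitz, binomZ]
  · intro i j (hij : j < i)
    exact binomZ_of_neg (by rw [Fin.lt_def] at hij; omega)

theorem det_binomToeplitz_self (c d : ℕ) : (binomToeplitz c c d).det = 1 := by
  rw [Matrix.det_of_isLowerTriangular]
  · simp [binomToeplitz, binomZ_natCast]
  · intro i j (hij : i < j)
    exact binomZ_of_lt (by rw [Fin.lt_def] at hij; omega)

theorem det_binomToeplitz_condensation (c d : ℕ) (a : ℤ) :
    (binomToeplitz c a (d + 2)).det * (binomToeplitz c a d).det =
      (binomToeplitz c a (d + 1)).det ^ 2 -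
        (binomToeplitz c (a + 1) (d + 1)).det * (binomToeplitz c (a - 1) (d + 1)).det := by
  have h := Matrix.desnanot_jacobi (binomToeplitz c a (d + 2))
  rw [binomToeplitz_submatrix a _ _ 1 1 (fun _ => rfl) (fun _ => rfl),
    binomToeplitz_submatrix a _ _ 1 1 (fun _ => rfl) (fun _ => rfl),
    binomToeplitz_submatrix a Fin.castSucc Fin.castSucc 0 0 (fun _ => rfl) (fun _ => rfl),
    binomToeplitz_submatrix a Fin.castSucc Fin.succ 0 1 (fun _ => rfl) (fun _ => rfl),
    binomToeplitz_submatrix a Fin.succ Fin.castSucc 1 0 (fun _ => rfl) (fun _ => rfl)] at h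
  simp only [Nat.cast_one, Nat.cast_zero, add_sub_cancel_right, sub_zero, add_zero] at h
  linear_combination h

def macMahonFactor (i a e : ℕ) : ℚ := (i ! * (a + e + i)! : ℚ) / ((a + i)! * (e + i)!)

/-- MacMahon's product, which counts the plane partitions inside an `a × e × d` box. -/
def macMahon (d a e : ℕ) : ℚ := ∏ i ∈ range d, macMahonFactor i a e

theorem macMahonFactor_succ_mul (i a e : ℕ) :
    macMahonFactor (i + 1) a e * ((a + i + 1) * (e + i + 1)) =
      macMahonFactor i a e * ((i + 1) * (a + e + i + 1)) := by
  simp only [macMahonFactor, ← add_assoc, Nat.factorial_succ]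
  push_cast
  field_simp

theorem macMahonFactor_shift_mul (i x y : ℕ) :
    macMahonFactor i (x + 2) y * macMahonFactor i x (y + 2) * ((x + i + 2) * (y + i + 2)) =
      macMahonFactor i (x + 1) (y + 1) ^ 2 * ((x + i + 1) * (y + i + 1)) := by
  rw [macMahonFactor, macMahonFactor, macMahonFactor, show x + 2 + i = x + i + 1 + 1 by ring,
    show y + 2 + i = y + i + 1 + 1 by ring, show x + 1 + i = x + i + 1 by ring,
    show y + 1 + i = y + i + 1 by ring, show x + (y + 2) = x + 2 + y by ring,
    show x + 1 + (y + 1) = x + 2 + y by ring]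
  simp only [Nat.factorial_succ]
  push_cast
  field_simp
  ring

theorem macMahon_succ (d a e : ℕ) :
    macMahon (d + 1) a e = macMahon d a e * macMahonFactor d a e :=
  prod_range_succ _ _

theorem macMahon_pos (d a e : ℕ) : 0 < macMahon d a e :=
  prod_pos fun _ _ => by unfold macMahonFactor; positivity

theorem macMahon_zero_left (d e : ℕ) : macMahon d 0 e = 1 :=
  prod_eq_one fun i _ => by
    rw [macMahonFactor, zero_add, zero_add, mul_comm]
    exact div_self (by positivity)

theorem macMahon_zero_right (d a : ℕ) : macMahon d a 0 = 1 :=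
  prod_eq_one fun i _ => by
    rw [macMahonFactor, add_zero, zero_add, mul_comm]
    exact div_self (by positivity)

theorem macMahon_one (a e : ℕ) : macMahon 1 a e = (a + e).choose a := by
  rw [macMahon, prod_range_one, macMahonFactor, Nat.cast_choose ℚ (Nat.le_add_right a e),
    Nat.add_sub_cancel_left]
  simp

theorem macMahon_succ_succ_mul (d a e : ℕ) :
    macMahon (d + 2) a e * macMahon d a e * ((a + d + 1) * (e + d + 1)) =
      macMahon (d + 1) a e ^ 2 * ((d + 1) * (a + e + d + 1)) := by
  rw [macMahon_succ (d + 1), macMahon_succ d]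
  linear_combination macMahon d a e ^ 2 * macMahonFactor d a e * macMahonFactor_succ_mul d a e

theorem macMahon_shift_mul (d x y : ℕ) :
    macMahon d (x + 2) y * macMahon d x (y + 2) * ((x + d + 1) * (y + d + 1)) =
      macMahon d (x + 1) (y + 1) ^ 2 * ((x + 1) * (y + 1)) := by
  induction d with
  | zero => simp [macMahon]
  | succ d ih =>
    rw [macMahon_succ, macMahon_succ, macMahon_succ]
    push_cast
    linear_combination macMahon d (x + 2) y * macMahon d x (y + 2) *
        macMahonFactor_shift_mul d x y + macMahonFactor d (x + 1) (y + 1) ^ 2 * ih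

theorem macMahon_condensation (d x y : ℕ) :
    macMahon (d + 2) (x + 1) (y + 1) * macMahon d (x + 1) (y + 1) =
      macMahon (d + 1) (x + 1) (y + 1) ^ 2 -
        macMahon (d + 1) (x + 2) y * macMahon (d + 1) x (y + 2) := by
  have h₁ := macMahon_succ_succ_mul d (x + 1) (y + 1)
  have h₂ := macMahon_shift_mul (d + 1) x y
  have hP : ((x : ℚ) + d + 2) * (y + d + 2) ≠ 0 := by positivity
  apply mul_right_cancel₀ hP
  push_cast at h₁ h₂
  linear_combination h₁ + h₂

theorem macMahon_eq_prod_reflect (d a e : ℕ) :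
    macMahon d a e =
      ∏ i ∈ range d, (i ! * (a + e + i)! : ℚ) / ((a + (d - 1 - i))! * (e + (d - 1 - i))!) := by
  simp only [macMahon, macMahonFactor]
  rw [prod_div_distrib, prod_div_distrib,
    prod_range_reflect (fun i => ((a + i)! * (e + i)! : ℚ))]

theorem det_binomToeplitz (d a e : ℕ) :
    ((binomToeplitz (a + e) a d).det : ℚ) = macMahon d a e := by
  induction d using Nat.twoStepInduction generalizing a e with
  | zero => simp [macMahon]
  | one => simp [binomToeplitz, binomZ_natCast, macMahon_one]
  | more d ih₀ ih₁ =>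
    rcases Nat.eq_zero_or_pos a with rfl | ha
    · simp [det_binomToeplitz_zero, macMahon_zero_left]
    rcases Nat.eq_zero_or_pos e with rfl | he
    · simp [det_binomToeplitz_self, macMahon_zero_right]
    obtain ⟨x, rfl⟩ : ∃ x, a = x + 1 := ⟨a - 1, by omega⟩
    obtain ⟨y, rfl⟩ : ∃ y, e = y + 1 := ⟨e - 1, by omega⟩
    have hplus : ((binomToeplitz (x + 1 + (y + 1)) ((x + 1 : ℕ) + 1) (d + 1)).det : ℚ) =
        macMahon (d + 1) (x + 2) y := by
      rw [show x + 1 + (y + 1) = x + 2 + y by ring,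
        show ((x + 1 : ℕ) : ℤ) + 1 = ((x + 2 : ℕ) : ℤ) by push_cast; ring]
      exact ih₁ (x + 2) y
    have hminus : ((binomToeplitz (x + 1 + (y + 1)) ((x + 1 : ℕ) - 1) (d + 1)).det : ℚ) =
        macMahon (d + 1) x (y + 2) := by
      rw [show x + 1 + (y + 1) = x + (y + 2) by ring,
        show ((x + 1 : ℕ) : ℤ) - 1 = x by push_cast; ring]
      exact ih₁ x (y + 2)
    have h := congrArg (Int.cast : ℤ → ℚ)
      (det_binomToeplitz_condensation (x + 1 + (y + 1)) d (x + 1 : ℕ))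
    simp only [Int.cast_mul, Int.cast_sub, Int.cast_pow] at h
    rw [ih₀, ih₁, hplus, hminus, ← macMahon_condensation] at h
    exact mul_right_cancel₀ (macMahon_pos d _ _).ne' h

theorem qMinor_zero_eq (a e d : ℕ) :
    qMinor (a + d + 1) (e + d) d 0 =
      (-1) ^ (d * (d - 1) / 2) * (binomToeplitz (a + e) a d).det := by
  have hrev : (hankelH (a + d + 1) (e + d) d).submatrix id (Fin.succAbove 0) =
      (binomToeplitz (a + e) a d).submatrix id Fin.revPerm := by
    ext i j
    simp only [hankelH, binomToeplitz, Matrix.submatrix_apply, Matrix.of_apply, id,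
      Fin.succAbove_zero, Fin.val_succ, Fin.revPerm_apply, Fin.val_rev]
    rw [show a + d + 1 + (e + d) - 2 * d - 1 = a + e by omega]
    congr 1
    omega
  rw [qMinor, hrev, Matrix.det_permute', Fin.sign_revPerm]
  push_cast
  rfl

theorem q_zero_eval_general (m n d : ℕ) (hdm : d < m) (hdn : d < n) :
    ((qMinor m n d 0 : ℤ) : ℚ) =
      (-1) ^ (d * (d - 1) / 2) *
        ∏ i ∈ Finset.range d,
          ((i.factorial : ℚ) * ((m + n - 2 * d - 1 + i).factorial : ℚ)) /
            (((m - i - 2).factorial : ℚ) * ((n - i - 1).factorial : ℚ)) := by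
  obtain ⟨a, rfl⟩ : ∃ a, m = a + d + 1 := ⟨m - d - 1, by omega⟩
  obtain ⟨e, rfl⟩ : ∃ e, n = e + d := ⟨n - d, by omega⟩
  rw [qMinor_zero_eq, Int.cast_mul, Int.cast_pow, Int.cast_neg, Int.cast_one, det_binomToeplitz,
    macMahon_eq_prod_reflect]
  refine congrArg _ (prod_congr rfl fun i hi => ?_)
  have hi := mem_range.1 hi
  rw [show a + d + 1 + (e + d) - 2 * d - 1 = a + e by omega,
    show a + d + 1 - i - 2 = a + (d - 1 - i) by omega, show e + d - i - 1 = e + (d - 1 - i) by omega]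

/-- Explicit evaluation of the minor `q_0(m,n,d)`. -/
theorem q_zero_eval (m n d : ℕ) (hd : 0 < d) (hdm : d < m) (hdn : d < n) :
    ((qMinor m n d 0 : ℤ) : ℚ) =
      (-1) ^ (d * (d - 1) / 2) *
        ∏ i ∈ Finset.range d,
          ((i.factorial : ℚ) * ((m + n - 2 * d - 1 + i).factorial : ℚ)) /
            (((m - i - 2).factorial : ℚ) * ((n - i - 1).factorial : ℚ)) :=
  q_zero_eval_general m n d hdm hdn
end

section
/- Let m, n, d be natural numbers with 0 < d < min(m,n) and c = m+n-2d-1. The d×(d+1) matrix H with entries C(c, m-i-j) for 1 ≤ i ≤ d, 0 ≤ j ≤ d has rank d over ℚ, and its kernel is one-dimensional, spanned by the vector (q_0, -q_1, ..., (-1)^d q_d), where q_j is the determinant of the submatrix of H obtained by deleting the (j+1)-th column. -/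
/-!
Suppose `g ᵥ* H = 0` with `g ≠ 0`. The entries of `g ᵥ* H` are the `d + 1` consecutive
coefficients of `F = (1 + X)^c · ∑ gᵢ Xⁱ` in degrees `m - d - 1, …, m - 1`, so `F` has at
most `c - 1` nonzero coefficients. But `F` vanishes to order `c` at `-1`, and a nonzero
polynomial has more nonzero coefficients than its multiplicity at any nonzero point. So the
rows of `H` are independent and its kernel is a line. The signed maximal minors lie in the
kernel by Laplace expansion of `H` with a repeated row adjoined, and they do not all vanish
because some unit row vector completes the rows of `H` to a basis.
-/

open Finset

namespace Polynomial

variable {R : Type*}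

theorem card_support_X_mul [Semiring R] (p : R[X]) : #(X * p).support = #p.support := by
  have : (X * p).support = p.support.map (addRightEmbedding 1) := by
    ext k
    cases k <;> simp [coeff_X_mul]
  rw [this, card_map]

theorem card_support_derivative_lt [Semiring R] [IsAddTorsionFree R] {p : R[X]}
    (h0 : p.coeff 0 ≠ 0) : #(derivative p).support < #p.support := by
  calc #(derivative p).support ≤ #(p.support.erase 0) :=
        card_le_card_of_injOn (· + 1)
          (fun k hk => mem_erase.mpr ⟨k.succ_ne_zero, mem_support_derivative.mp hk⟩)
          (fun _ _ _ _ h => Nat.succ_injective h)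
    _ < #p.support := card_erase_lt_of_mem (mem_support_iff.mpr h0)

/-- Either `p` has a factor `X`, which does not change the multiplicity at `r ≠ 0` nor the
number of terms, or differentiation lowers both by one. -/
theorem rootMultiplicity_lt_card_support [CommRing R] [IsDomain R] [CharZero R] {p : R[X]}
    (hp : p ≠ 0) {r : R} (hr : r ≠ 0) : p.rootMultiplicity r < #p.support := by
  induction hN : p.natDegree using Nat.strong_induction_on generalizing p with
  | _ N ih =>
  by_cases hroot : p.IsRoot r
  swap
  · rw [rootMultiplicity_eq_zero hroot]
    exact card_pos.mpr (nonempty_support_iff.mpr hp)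
  have hdeg : p.natDegree ≠ 0 := fun h => by
    rw [eq_C_of_natDegree_eq_zero h] at hp hroot
    exact hp (by simpa using hroot)
  by_cases h0 : p.coeff 0 = 0
  · have hX : X * p.divX = p := by simpa [h0] using X_mul_divX_add p
    have hq : p.divX ≠ 0 := fun h => hp (by rw [← hX, h, mul_zero])
    have hXr : rootMultiplicity r (X : R[X]) = 0 := rootMultiplicity_eq_zero (by simpa using hr)
    rw [← hX, rootMultiplicity_mul (hX.symm ▸ hp), hXr, zero_add, card_support_X_mul]
    exact ih _ (by rw [← hN, natDegree_divX_eq_natDegree_tsub_one]; omega) hq rfl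
  · have hD : derivative p ≠ 0 := fun h => hdeg (derivative_eq_zero.mp h)
    have := ih _ (hN ▸ natDegree_derivative_lt hdeg) hD rfl
    rw [derivative_rootMultiplicity_of_root hroot] at this
    have := card_support_derivative_lt h0
    have := (rootMultiplicity_pos hp).mpr hroot
    omega

end Polynomial

namespace Matrix

section CommRing

variable {R S : Type*} [CommRing R] [CommRing S] {d : ℕ}

def signedMinors (A : Matrix (Fin d) (Fin (d + 1)) R) : Fin (d + 1) → R :=
  fun j => (-1) ^ (j : ℕ) * (A.submatrix id j.succAbove).det

theorem signedMinors_map (A : Matrix (Fin d) (Fin (d + 1)) R) (f : R →+* S) :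
    (A.map f).signedMinors = f ∘ A.signedMinors := by
  ext j
  simp [signedMinors, ← submatrix_map, RingHom.map_det]

theorem det_of_cons_eq_dotProduct (A : Matrix (Fin d) (Fin (d + 1)) R) (y : Fin (d + 1) → R) :
    (of (Fin.cons y A)).det = y ⬝ᵥ A.signedMinors := by
  rw [det_succ_row_zero, dotProduct]
  refine sum_congr rfl fun j _ => ?_
  change (-1) ^ (j : ℕ) * y j * (A.submatrix id j.succAbove).det = y j * A.signedMinors j
  rw [signedMinors]
  ring

theorem mulVec_signedMinors (A : Matrix (Fin d) (Fin (d + 1)) R) :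
    A *ᵥ A.signedMinors = 0 := by
  ext i
  rw [Pi.zero_apply, mulVec, ← det_of_cons_eq_dotProduct]
  exact det_zero_of_row_eq (Fin.succ_ne_zero i).symm rfl

end CommRing

section Field

variable {K : Type*} [Field K] {d : ℕ} {A : Matrix (Fin d) (Fin (d + 1)) K}

theorem finrank_ker_mulVecLin (hA : LinearIndependent K A.row) :
    Module.finrank K (LinearMap.ker A.mulVecLin) = 1 := by
  have := LinearMap.finrank_range_add_finrank_ker A.mulVecLin
  have hrank : Module.finrank K (LinearMap.range A.mulVecLin) = d :=
    hA.rank_matrix.trans (Fintype.card_fin d)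
  rw [hrank, Module.finrank_fin_fun] at this
  omega

theorem signedMinors_ne_zero (hA : LinearIndependent K A.row) : A.signedMinors ≠ 0 := by
  obtain ⟨v, hv, hv0⟩ := Submodule.exists_mem_ne_zero_of_ne_bot
    (Submodule.one_le_finrank_iff.mp (finrank_ker_mulVecLin hA).ge)
  obtain ⟨j, hj⟩ := Function.ne_iff.mp hv0
  have hrows : ∀ z ∈ Submodule.span K (Set.range A.row), z ⬝ᵥ v = 0 := fun z hz => by
    induction hz using Submodule.span_induction with
    | mem _ hz => obtain ⟨i, rfl⟩ := hz; exact congrFun (show A *ᵥ v = 0 from hv) i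
    | zero => exact zero_dotProduct v
    | add _ _ _ _ h₁ h₂ => rw [add_dotProduct, h₁, h₂, add_zero]
    | smul _ _ _ h => rw [smul_dotProduct, h, smul_zero]
  have hy : Pi.single j 1 ∉ Submodule.span K (Set.range A.row) := fun hmem =>
    hj (by simpa [single_dotProduct] using hrows _ hmem)
  have hdet : (of (Fin.cons (Pi.single j 1) A)).det ≠ 0 :=
    ((isUnit_iff_isUnit_det _).mp
      (linearIndependent_rows_iff_isUnit.mp (linearIndependent_finCons.mpr ⟨hA, hy⟩))).ne_zero
  intro hw
  rw [det_of_cons_eq_dotProduct, hw, dotProduct_zero] at hdet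
  exact hdet rfl

theorem ker_mulVecLin_eq_span_signedMinors (hA : LinearIndependent K A.row) :
    LinearMap.ker A.mulVecLin = K ∙ A.signedMinors := by
  refine (Submodule.eq_of_le_of_finrank_le ?_ ?_).symm
  · exact (Submodule.span_singleton_le_iff_mem _ _).mpr (mulVec_signedMinors A)
  · rw [finrank_span_singleton (signedMinors_ne_zero hA), finrank_ker_mulVecLin hA]

end Field

end Matrix

open Polynomial Matrix

theorem binomZ_natCast_sub (c k i : ℕ) :
    binomZ c ((k : ℤ) - i) = if i ≤ k then (c.choose (k - i) : ℤ) else 0 := by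
  unfold binomZ
  by_cases h : i ≤ k
  · rw [if_pos (by omega), if_pos h, show ((k : ℤ) - i).toNat = k - i by omega]
  · rw [if_neg (by omega), if_neg h]

theorem vecMul_hankelH_map {R : Type*} [CommRing R] [DecidableEq R] {m n d : ℕ} (hdm : d < m)
    (g : Fin d → R) (j : Fin (d + 1)) :
    (g ᵥ* (hankelH m n d).map (Int.cast : ℤ → R)) j =
      ((X + 1) ^ (m + n - 2 * d - 1) * ofFn d g).coeff (m - 1 - j) := by
  rw [ofFn_eq_sum_monomial, mul_sum, finsetSum_coeff, vecMul, dotProduct]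
  refine sum_congr rfl fun i _ => ?_
  have hidx : (m : ℤ) - ((i : ℕ) + 1) - (j : ℕ) = ((m - 1 - j : ℕ) : ℤ) - (i : ℕ) := by omega
  rw [← C_mul_X_pow_eq_monomial, mul_left_comm, coeff_C_mul, coeff_mul_X_pow',
    coeff_X_add_one_pow, map_apply, hankelH, of_apply, hidx, binomZ_natCast_sub]
  split_ifs <;> simp [mul_comm]

theorem hankelH_map_row_linearIndependent {K : Type*} [Field K] [CharZero K] {m n d : ℕ}
    (hdm : d < m) (hdn : d < n) :
    LinearIndependent K ((hankelH m n d).map (Int.cast : ℤ → K)).row := by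
  classical
  rw [Fintype.linearIndependent_iff]
  intro g hg
  suffices ofFn d g = 0 by simpa using congrFun (injective_ofFn d (this.trans (map_zero _).symm))
  have hvec : g ᵥ* (hankelH m n d).map (Int.cast : ℤ → K) = 0 := by rwa [vecMul_eq_sum]
  by_contra hg0
  obtain ⟨a, rfl⟩ : ∃ a, m = d + 1 + a := ⟨m - (d + 1), by omega⟩
  obtain ⟨b, rfl⟩ : ∃ b, n = d + 1 + b := ⟨n - (d + 1), by omega⟩
  have hc : d + 1 + a + (d + 1 + b) - 2 * d - 1 = a + b + 1 := by omega
  set F : K[X] := (X + 1) ^ (a + b + 1) * ofFn d g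
  have hF0 : F ≠ 0 := mul_ne_zero (pow_ne_zero _ (by simpa using X_add_C_ne_zero (1 : K))) hg0
  have hwindow : ∀ k, a ≤ k → k ≤ a + d → F.coeff k = 0 := fun k hak hkd => by
    have := congrFun hvec ⟨a + d - k, by omega⟩
    rwa [vecMul_hankelH_map (by omega), hc, show d + 1 + a - 1 - (a + d - k) = k by omega] at this
  have hdeg : F.natDegree ≤ a + b + d := by
    have := ofFn_natDegree_lt (Nat.one_le_iff_ne_zero.mpr (ne_zero_of_ofFn_ne_zero hg0)) g
    have : ((X + 1 : K[X]) ^ (a + b + 1)).natDegree ≤ a + b + 1 := by compute_degree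
    exact natDegree_mul_le.trans (by omega)
  have hsupp : F.support ⊆ range a ∪ Ioc (a + d) (a + b + d) := fun k hk => by
    have := le_natDegree_of_mem_supp k hk
    simp only [mem_union, mem_range, mem_Ioc]
    by_contra h
    exact mem_support_iff.mp hk (hwindow k (by omega) (by omega))
  have hcard : #F.support ≤ a + b := by
    have := (card_le_card hsupp).trans (card_union_le _ _)
    rw [card_range, Nat.card_Ioc] at this
    omega
  have hmult : a + b + 1 ≤ F.rootMultiplicity (-1) :=
    (le_rootMultiplicity_iff hF0).mpr (by rw [C_neg, C_1, sub_neg_eq_add]; exact dvd_mul_right _ _)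
  have := rootMultiplicity_lt_card_support hF0 (neg_ne_zero.mpr one_ne_zero)
  omega

theorem hankel_rank_and_kernel_general (m n d : ℕ) (hdm : d < m) (hdn : d < n) :
    ((hankelH m n d).map (Int.cast : ℤ → ℚ)).rank = d ∧
      ∀ v : Fin (d + 1) → ℚ,
        ((hankelH m n d).map (Int.cast : ℤ → ℚ)).mulVec v = 0 ↔
          ∃ t : ℚ, v = t • fun j : Fin (d + 1) =>
            (-1 : ℚ) ^ (j : ℕ) * ((qMinor m n d j : ℤ) : ℚ) := by
  set A := (hankelH m n d).map (Int.cast : ℤ → ℚ)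
  have hA : LinearIndependent ℚ A.row := hankelH_map_row_linearIndependent hdm hdn
  have hw : A.signedMinors =
      fun j : Fin (d + 1) => (-1 : ℚ) ^ (j : ℕ) * ((qMinor m n d j : ℤ) : ℚ) := by
    rw [show A = (hankelH m n d).map (Int.castRingHom ℚ) from rfl, signedMinors_map]
    ext j
    simp [signedMinors, qMinor]
  refine ⟨hA.rank_matrix.trans (Fintype.card_fin d), fun v => ?_⟩
  rw [← hw, ← mulVecLin_apply, ← LinearMap.mem_ker, ker_mulVecLin_eq_span_signedMinors hA,
    Submodule.mem_span_singleton]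
  exact exists_congr fun t => eq_comm

/-- The binomial Hankel matrix `H(m,n,d)` has full rank `d` over `ℚ`, and its kernel is
one-dimensional, spanned by the vector of signed maximal minors `((-1)^j q_j)_j`. -/
theorem hankel_rank_and_kernel (m n d : ℕ) (hd : 0 < d) (hdm : d < m) (hdn : d < n) :
    ((hankelH m n d).map (Int.cast : ℤ → ℚ)).rank = d ∧
      ∀ v : Fin (d + 1) → ℚ,
        ((hankelH m n d).map (Int.cast : ℤ → ℚ)).mulVec v = 0 ↔
          ∃ t : ℚ, v = t • fun j : Fin (d + 1) =>
            (-1 : ℚ) ^ (j : ℕ) * ((qMinor m n d j : ℤ) : ℚ) :=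
  hankel_rank_and_kernel_general m n d hdm hdn
end

section
/- Let m, n, d be natural numbers with 0 < d < min(m,n), c = m+n-2d-1, and let q_j(m,n,d) for 0 ≤ j ≤ d denote the maximal minors of the d×(d+1) binomial Hankel matrix (C(c, m-i-j))_{1≤i≤d, 0≤j≤d} (deleting the (j+1)-th column). Then ∑_{j=0}^{d} q_j(m,n,d) = q_0(m+1, n, d), where q_0(m+1,n,d) is the corresponding minor for the matrix with entries C(c+1, m+1-i-j). -/
open Finset

lemma binomZ_succ (c : ℕ) (k : ℤ) : binomZ (c + 1) k = binomZ c k + binomZ c (k - 1) := by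
  unfold binomZ
  rcases lt_trichotomy k 0 with h | h | h
  · rw [if_neg (not_le.2 h), if_neg (not_le.2 h), if_neg (by omega)]; ring
  · subst h; norm_num
  · rw [if_pos h.le, if_pos h.le, if_pos (by omega)]
    have hk : k.toNat = (k - 1).toNat + 1 := by omega
    rw [hk, Nat.choose_succ_succ]
    push_cast; ring

lemma inj_step {d : ℕ} (r : Fin d → ℕ)
    (h1 : ∀ k : Fin d, r k = k ∨ r k = (k : ℕ) + 1) (h2 : Function.Injective r)
    (k : Fin d) (hk : r k = (k : ℕ) + 1) :
    ∀ l : Fin d, (k : ℕ) ≤ (l : ℕ) → r l = (l : ℕ) + 1 := by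
  have key : ∀ t : ℕ, ∀ l : Fin d, (l : ℕ) = (k : ℕ) + t → r l = (l : ℕ) + 1 := by
    intro t
    induction t with
    | zero => intro l hl; have : l = k := Fin.ext (by omega); subst this; simpa using hk
    | succ t ih =>
      intro l hl
      have hlt : (k : ℕ) + t < d := by omega
      set l' : Fin d := ⟨(k : ℕ) + t, hlt⟩ with hl'
      have h1' : r l' = (k : ℕ) + t + 1 := ih l' rfl
      rcases h1 l with h | h
      · exfalso
        have hne : l ≠ l' := by
          intro e
          have := congrArg Fin.val e
          simp only [hl'] at this
          omega
        exact hne (h2 (by rw [h, h1']; omega))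
      · exact h
  intro l hl
  exact key ((l : ℕ) - (k : ℕ)) l (by omega)

lemma succAbove_val {d : ℕ} (j : Fin (d + 1)) (k : Fin d) :
    ((j.succAbove k : Fin (d + 1)) : ℕ) = if (k : ℕ) < (j : ℕ) then (k : ℕ) else (k : ℕ) + 1 := by
  rw [Fin.succAbove]
  split_ifs with h h' h'
  · rfl
  · exact absurd (by simpa [Fin.lt_def] using h) h'
  · exact absurd (by simpa [Fin.lt_def] using h') h
  · rfl

lemma exists_j {d : ℕ} (r : Fin d → ℕ)
    (h1 : ∀ k : Fin d, r k = k ∨ r k = (k : ℕ) + 1) (h2 : Function.Injective r) :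
    ∃ j : Fin (d + 1), ∀ k : Fin d, r k = ((j.succAbove k : Fin (d + 1)) : ℕ) := by
  have hP : ∃ t, ∀ k : Fin d, t ≤ (k : ℕ) → r k = (k : ℕ) + 1 :=
    ⟨d, fun k hk => absurd k.2 (by omega)⟩
  classical
  set t := Nat.find hP with htdef
  have ht := Nat.find_spec hP
  have htle : t ≤ d := Nat.find_le (fun k hk => absurd k.2 (by omega))
  refine ⟨⟨t, by omega⟩, fun k => ?_⟩
  rw [succAbove_val]
  by_cases hk : (k : ℕ) < t
  · rw [if_pos hk]
    rcases h1 k with h | h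
    · exact h
    · exfalso
      have hstep := inj_step r h1 h2 k h
      have : t ≤ (k : ℕ) := Nat.find_le (fun l hl => hstep l hl)
      omega
  · rw [if_neg hk]
    exact ht k (not_lt.1 hk)


/-- The sum of all maximal minors of `H(m,n,d)` equals `q_0(m+1,n,d)`. -/
theorem sum_q_minors (m n d : ℕ) (hd : 0 < d) (hdm : d < m) (hdn : d < n) :
    ∑ j : Fin (d + 1), qMinor m n d j = qMinor (m + 1) n d 0 := by
  classical
  set c := m + n - 2 * d - 1 with hc
  set v : ℕ → Fin d → ℤ := fun s i => binomZ c ((m : ℤ) - ((i : ℕ) + 1) - s) with hv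
  set A : Fin d → Finset ℕ := fun k => {(k : ℕ), (k : ℕ) + 1} with hA
  -- q minors as determinants of row families of v's
  have hq : ∀ j : Fin (d + 1),
      qMinor m n d j = Matrix.detRowAlternating (fun k i => v ((j.succAbove k : Fin (d+1)) : ℕ) i) := by
    intro j
    rw [qMinor, ← Matrix.det_transpose]
    rfl
  -- RHS as determinant with rows being sums
  have hRHS : qMinor (m + 1) n d 0 =
      Matrix.detRowAlternating (fun k : Fin d => fun i => ∑ s ∈ A k, v s i) := by
    rw [qMinor, ← Matrix.det_transpose]
    show Matrix.detRowAlternating _ = _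
    congr 1
    funext k i
    have h0 : ((0 : Fin (d + 1)).succAbove k : ℕ) = (k : ℕ) + 1 := by
      rw [succAbove_val]; simp
    have hc1 : m + 1 + n - 2 * d - 1 = c + 1 := by omega
    have hsum : ∑ s ∈ A k, v s i = v (k : ℕ) i + v ((k : ℕ) + 1) i := by
      rw [hA]; exact Finset.sum_pair (by omega)
    rw [hsum]
    show binomZ (m + 1 + n - 2 * d - 1) ((m + 1 : ℕ) - ((i : ℕ) + 1) - (((0 : Fin (d+1)).succAbove k : Fin (d+1)) : ℕ)) = _
    rw [hc1, h0, binomZ_succ]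
    simp only [hv]
    congr 2 <;> push_cast <;> ring
  rw [hRHS]
  -- expand multilinearly
  have hexp := (Matrix.detRowAlternating (R := ℤ) (n := Fin d)).toMultilinearMap.map_sum_finset
      (g := fun (_ : Fin d) (s : ℕ) => v s) (A := A)
  simp only [AlternatingMap.coe_multilinearMap] at hexp
  have heq : (fun k : Fin d => fun i => ∑ s ∈ A k, v s i) = fun k => ∑ s ∈ A k, v s := by
    funext k i; rw [Finset.sum_apply]
  rw [heq, hexp]
  rw [← Finset.sum_filter_add_sum_filter_not (Fintype.piFinset A) (fun r => Function.Injective r)]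
  have hzero : ∑ r ∈ (Fintype.piFinset A).filter (fun r => ¬ Function.Injective r),
      Matrix.detRowAlternating (fun k : Fin d => v (r k)) = 0 := by
    apply Finset.sum_eq_zero
    intro r hr
    rw [Finset.mem_filter, Function.not_injective_iff] at hr
    obtain ⟨a, b, hab, hne⟩ := hr.2
    exact Matrix.detRowAlternating.map_eq_zero_of_eq _ (by rw [hab]) hne
  rw [hzero, add_zero]
  have himg : (Fintype.piFinset A).filter (fun r => Function.Injective r)
      = Finset.image (fun (j : Fin (d+1)) (k : Fin d) => ((j.succAbove k : Fin (d+1)) : ℕ))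
          Finset.univ := by
    ext r
    simp only [Finset.mem_filter, Finset.mem_image, Finset.mem_univ, true_and,
      Fintype.mem_piFinset]
    constructor
    · rintro ⟨hmem, hinj⟩
      have h1 : ∀ k : Fin d, r k = k ∨ r k = (k : ℕ) + 1 := by
        intro k
        have := hmem k
        simp only [hA, Finset.mem_insert, Finset.mem_singleton] at this
        tauto
      obtain ⟨j, hj⟩ := exists_j r h1 hinj
      exact ⟨j, funext fun k => (hj k).symm⟩
    · rintro ⟨j, rfl⟩
      refine ⟨fun k => ?_, ?_⟩
      · simp only [hA, Finset.mem_insert, Finset.mem_singleton, succAbove_val]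
        split_ifs <;> simp
      · exact Fin.val_injective.comp (Fin.succAbove_right_injective)
  rw [himg, Finset.sum_image ?hinj]
  case hinj =>
    intro a _ b _ h
    apply Fin.succAbove_left_injective
    funext k
    exact Fin.val_injective (congrFun h k)
  exact Finset.sum_congr rfl fun j _ => hq j
end

section
/- Let K be a field, f, g ∈ K[x], d a natural number, and α ∈ K. Then Sres_d(f,g) evaluated/composed at x+α equals Sres_d(f(x+α), g(x+α)), i.e., the order-d subresultant commutes with translation of the variable: Sres_d(f,g)(x+α) = Sres_d(f(x+α), g(x+α))(x). -/
open Polynomial Finset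

noncomputable section

/-- The Sylvester-type matrix defining the order-`d` subresultant of `f` and `g`
(of respective degrees `m` and `n`): an `(m+n-2d) × (m+n-2d)` matrix over `K[x]`
whose first `n-d` rows carry the coefficients of `f` (and `x^(n-d-1-i)·f` in the
last column) and whose last `m-d` rows carry the coefficients of `g`
(and `x^(m-d-1-i)·g` in the last column). -/
def sresMatrix {K : Type*} [Field K] (m n d : ℕ) (f g : K[X]) :
    Matrix (Fin (m + n - 2 * d)) (Fin (m + n - 2 * d)) K[X] :=
  Matrix.of fun i j =>
    if (i : ℕ) < n - d then
      if (j : ℕ) = m + n - 2 * d - 1 then X ^ (n - d - 1 - (i : ℕ)) * f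
      else if (j : ℕ) ≤ m + (i : ℕ) then C (f.coeff (m + (i : ℕ) - (j : ℕ))) else 0
    else
      if (j : ℕ) = m + n - 2 * d - 1 then X ^ (m - d - 1 - ((i : ℕ) - (n - d))) * g
      else if (j : ℕ) ≤ n + ((i : ℕ) - (n - d)) then
        C (g.coeff (n + ((i : ℕ) - (n - d)) - (j : ℕ)))
      else 0

/-- The order-`d` polynomial subresultant `Sres_d(f,g)` of `f` and `g`, of respective
degrees `m` and `n`. -/
def Sres {K : Type*} [Field K] (m n d : ℕ) (f g : K[X]) : K[X] :=
  (sresMatrix m n d f g).det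

/-- The `d`-th principal subresultant: the coefficient of `x^d` in `Sres_d(f,g)`. -/
def PSres {K : Type*} [Field K] (m n d : ℕ) (f g : K[X]) : K :=
  (Sres m n d f g).coeff d

end


/-! Composition with `X + C α` (`taylor α`) is a ring endomorphism of `K[X]`, so it passes
through the determinant, fixes the constant coefficient columns, and replaces each last-column
entry `X ^ k * f` by `(X + C α) ^ k * f(X + α)`. Since the rows have degree at most
`m + n - d - 1`, the coefficients of a translated row are a unitriangular combination of the
coefficient columns, so the coefficient columns may be translated too. Finally the binomial
expansion of `(X + C α) ^ k` writes each row `(X + C α) ^ k * f(X + α)` as a unitriangular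
combination of the rows `X ^ l * f(X + α)` of the matrix of the translated polynomials. -/

open scoped Matrix

section Taylor

variable {R : Type*} [CommSemiring R]

theorem coeff_taylor_eq_sum_range (r : R) {p : R[X]} {B : ℕ} (hp : p.natDegree ≤ B) (s : ℕ) :
    (taylor r p).coeff s = ∑ t ∈ range (B + 1), p.coeff t * (r ^ (t - s) * t.choose s) := by
  conv_lhs => rw [p.as_sum_range' (B + 1) (Nat.lt_succ_of_le hp)]
  simp only [map_sum, taylor_monomial, finsetSum_coeff, coeff_C_mul, coeff_X_add_C_pow]

theorem coeff_taylor_eq_sum_fin (r : R) {p : R[X]} {B N s : ℕ} (hp : p.natDegree ≤ B)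
    (hN : N ≤ B + 1) (hs : B + 1 ≤ s + N) :
    (taylor r p).coeff s =
      ∑ j : Fin N, p.coeff (B - j) * (r ^ (B - j - s) * (B - j).choose s) := by
  rw [coeff_taylor_eq_sum_range r hp, ← sum_range_reflect, ← sum_range_add_sum_Ico _ hN,
    Fin.sum_univ_eq_sum_range (fun j => p.coeff (B - j) * (r ^ (B - j - s) * (B - j).choose s)),
    sum_eq_zero (s := Ico N (B + 1)), add_zero]
  · simp only [add_tsub_cancel_right]
  · intro j hj
    rw [Nat.choose_eq_zero_of_lt (by grind), Nat.cast_zero, mul_zero, mul_zero]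

theorem X_add_C_pow_mul_eq_sum (r : R) (q : R[X]) {k L : ℕ} (hk : k < L) :
    (X + C r) ^ k * q = ∑ l ∈ range L, C (r ^ (k - l) * k.choose l) * (X ^ l * q) := by
  have hdeg : ((X + C r) ^ k).natDegree < L := by
    have := natDegree_pow_le_of_le k ((natDegree_add_C (a := r)).le.trans natDegree_X_le)
    omega
  rw [((X + C r) ^ k : R[X]).as_sum_range_C_mul_X_pow' hdeg]
  simp only [sum_mul, coeff_X_add_C_pow, mul_assoc]

end Taylor

theorem sum_fin_Ico_reflect {M : Type*} [AddCommMonoid M] {N lo hi : ℕ} (h : hi ≤ N)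
    (F : ℕ → M) :
    ∑ i ∈ univ.filter (fun i : Fin N => lo ≤ (i : ℕ) ∧ (i : ℕ) < hi), F (hi - 1 - i) =
      ∑ l ∈ range (hi - lo), F l := by
  refine sum_bij' (fun i _ => hi - 1 - i) (fun l hl => ⟨hi - 1 - l, by grind⟩) ?_ ?_ ?_ ?_ ?_
  all_goals intro x hx
  all_goals simp only [mem_filter, mem_univ, true_and, mem_range, Fin.ext_iff] at hx ⊢
  all_goals omega

section CoeffMatrix

variable {R : Type*} [CommRing R] {N : ℕ}

noncomputable def coeffMatrix (D : Fin N → ℕ) (a b : Fin N → R[X]) :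
    Matrix (Fin N) (Fin N) R[X] :=
  Matrix.of fun i j => if (j : ℕ) = N - 1 then b i else C ((a i).coeff (D j))

theorem det_map_C_eq_one {β : Matrix (Fin N) (Fin N) R} (hβ : β.BlockTriangular id)
    (hβ₁ : ∀ i, β i i = 1) : (β.map C).det = 1 := by
  rw [← RingHom.mapMatrix_apply, ← RingHom.map_det, Matrix.det_of_isUpperTriangular hβ]
  simp [hβ₁]

theorem coeffMatrix_mulVec (D : Fin N → ℕ) (β : Matrix (Fin N) (Fin N) R)
    (a b : Fin N → R[X]) :
    coeffMatrix D (β.map C *ᵥ a) (β.map C *ᵥ b) = β.map C * coeffMatrix D a b := by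
  refine Matrix.ext fun i j => ?_
  simp only [coeffMatrix, Matrix.of_apply, Matrix.mul_apply, Matrix.mulVec, dotProduct,
    Matrix.map_apply]
  split_ifs
  · rfl
  · simp only [finsetSum_coeff, coeff_C_mul, map_sum, map_mul]

theorem det_coeffMatrix_mulVec (D : Fin N → ℕ) {β : Matrix (Fin N) (Fin N) R}
    (hβ : β.BlockTriangular id) (hβ₁ : ∀ i, β i i = 1) (a b : Fin N → R[X]) :
    (coeffMatrix D (β.map C *ᵥ a) (β.map C *ᵥ b)).det = (coeffMatrix D a b).det := by
  rw [coeffMatrix_mulVec, Matrix.det_mul, det_map_C_eq_one hβ hβ₁, one_mul]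

theorem det_coeffMatrix_of_coeff_eq_sum (D : Fin N → ℕ) {γ : Matrix (Fin N) (Fin N) R}
    (hγ : γ.BlockTriangular id) (hγ₁ : ∀ j, γ j j = 1) (a b c : Fin N → R[X])
    (hc : ∀ i j : Fin N, (j : ℕ) ≠ N - 1 →
      (c i).coeff (D j) = ∑ j', (a i).coeff (D j') * γ j' j) :
    (coeffMatrix D c b).det = (coeffMatrix D a b).det := by
  let Γ : Matrix (Fin N) (Fin N) R := Matrix.of fun j' j =>
    if (j : ℕ) = N - 1 then if j' = j then 1 else 0 else γ j' j
  have hΓ : Γ.BlockTriangular id := by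
    intro j' j hj
    simp only [Γ, Matrix.of_apply]
    split_ifs with h h'
    · exact absurd h' (ne_of_gt hj)
    · rfl
    · exact hγ hj
  have hΓ₁ : ∀ j, Γ j j = 1 := fun j => by simp [Γ, hγ₁]
  suffices coeffMatrix D c b = coeffMatrix D a b * Γ.map C by
    rw [this, Matrix.det_mul, det_map_C_eq_one hΓ hΓ₁, mul_one]
  refine Matrix.ext fun i j => ?_
  simp only [coeffMatrix, Γ, Matrix.of_apply, Matrix.mul_apply, Matrix.map_apply]
  split_ifs with hj
  · simp [hj]
  · rw [hc i j hj, map_sum]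
    refine sum_congr rfl fun j' _ => ?_
    split_ifs with hj'
    · have : γ j' j = 0 := hγ (show j < j' by have := j.2; rw [Fin.lt_def]; omega)
      simp [this]
    · rw [map_mul]

theorem taylor_det_coeffMatrix (r : R) (D : Fin N → ℕ) (a b : Fin N → R[X]) :
    taylor r (coeffMatrix D a b).det = (coeffMatrix D a fun i => taylor r (b i)).det := by
  change (taylorAlgHom r).toRingHom _ = _
  rw [RingHom.map_det]
  congr 1
  refine Matrix.ext fun i j => ?_
  simp only [coeffMatrix, RingHom.mapMatrix_apply, Matrix.map_apply, Matrix.of_apply]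
  split_ifs <;> simp

/-- The coefficient of degree `s` of a translate involves only coefficients of degree `≥ s`, and
these all sit in coefficient columns because the entries have degree at most `B`. -/
theorem det_coeffMatrix_taylor (r : R) {B : ℕ} (hN : N ≤ B + 1) (p b : Fin N → R[X])
    (hp : ∀ i, (p i).natDegree ≤ B) :
    (coeffMatrix (fun j => B - j) (fun i => taylor r (p i)) b).det =
      (coeffMatrix (fun j => B - j) p b).det := by
  refine det_coeffMatrix_of_coeff_eq_sum _
    (γ := Matrix.of fun j' j : Fin N => r ^ (B - j' - (B - j)) * (B - j').choose (B - j))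
    ?_ ?_ p b _ ?_
  · intro j' j hj
    have : j.val < j'.val := hj
    simp only [Matrix.of_apply]
    rw [Nat.choose_eq_zero_of_lt (by omega), Nat.cast_zero, mul_zero]
  · intro j
    simp
  · intro i j _
    exact coeff_taylor_eq_sum_fin r (hp i) hN (by omega)

end CoeffMatrix

section Subresultant

variable (m n d : ℕ) {R : Type*} [CommRing R]

def sresShift (i : Fin (m + n - 2 * d)) : ℕ :=
  if (i : ℕ) < n - d then n - d - 1 - i else m + n - 2 * d - 1 - i

noncomputable def sresRow (f g : R[X]) (i : Fin (m + n - 2 * d)) : R[X] :=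
  X ^ sresShift m n d i * if (i : ℕ) < n - d then f else g

theorem sresMatrix_eq_coeffMatrix {K : Type*} [Field K] (hdn : d ≤ n) (f g : K[X]) :
    sresMatrix m n d f g =
      coeffMatrix (fun j => m + n - d - 1 - j) (sresRow m n d f g) (sresRow m n d f g) := by
  refine Matrix.ext fun i j => ?_
  have := i.2
  simp only [sresMatrix, coeffMatrix, sresRow, sresShift, Matrix.of_apply]
  split_ifs <;> (try rw [coeff_X_pow_mul']) <;> (try split_ifs) <;>
    first | rfl | (exfalso; omega) | (congr 2; omega) | simp

/-- The binomial coefficients of `(X + C α) ^ sresShift i`, placed in the block of rows of `i`. -/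
noncomputable def sresRowOp (α : R) : Matrix (Fin (m + n - 2 * d)) (Fin (m + n - 2 * d)) R :=
  Matrix.of fun i i' =>
    if ((i : ℕ) < n - d ↔ (i' : ℕ) < n - d) then
      α ^ (sresShift m n d i - sresShift m n d i') *
        (sresShift m n d i).choose (sresShift m n d i')
    else 0

theorem sresRowOp_blockTriangular (α : R) : (sresRowOp m n d α).BlockTriangular id := by
  intro i i' hi
  have : i'.val < i.val := hi
  have := i.2
  simp only [sresRowOp, sresShift, Matrix.of_apply]
  split_ifs <;> first | rfl | (exfalso; omega) |
    (rw [Nat.choose_eq_zero_of_lt (by omega), Nat.cast_zero, mul_zero])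

theorem sresRowOp_self (α : R) (i : Fin (m + n - 2 * d)) : sresRowOp m n d α i i = 1 := by
  simp [sresRowOp]

theorem natDegree_sresRow_le {f g : R[X]} (hf : f.natDegree ≤ m) (hg : g.natDegree ≤ n)
    (i : Fin (m + n - 2 * d)) : (sresRow m n d f g i).natDegree ≤ m + n - d - 1 := by
  have := i.2
  refine natDegree_mul_le.trans ((add_le_add_left (natDegree_X_pow_le _) _).trans ?_)
  unfold sresShift
  split_ifs <;> omega

theorem taylor_sresRow (hdm : d ≤ m) (α : R) (f g : R[X]) (i : Fin (m + n - 2 * d)) :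
    taylor α (sresRow m n d f g i) =
      ((sresRowOp m n d α).map C *ᵥ sresRow m n d (taylor α f) (taylor α g)) i := by
  have := i.2
  simp only [sresRow, taylor_mul, taylor_X_pow, Matrix.mulVec, dotProduct, Matrix.map_apply,
    sresRowOp, Matrix.of_apply, apply_ite (taylor α)]
  by_cases hi : (i : ℕ) < n - d
  · rw [X_add_C_pow_mul_eq_sum α _ (L := n - d - 0) (by rw [sresShift, if_pos hi]; omega),
      ← sum_fin_Ico_reflect (N := m + n - 2 * d) (by omega), sum_filter]
    refine sum_congr rfl fun i' _ => ?_
    have := i'.2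
    simp only [sresShift]
    split_ifs <;> first | (exfalso; omega) | simp
  · rw [X_add_C_pow_mul_eq_sum α _ (L := m + n - 2 * d - (n - d))
        (by rw [sresShift, if_neg hi]; omega),
      ← sum_fin_Ico_reflect (N := m + n - 2 * d) le_rfl, sum_filter]
    refine sum_congr rfl fun i' _ => ?_
    have := i'.2
    simp only [sresShift]
    split_ifs <;> first | (exfalso; omega) | simp

end Subresultant

/-- The subresultant commutes with translation of the variable:
`Sres_d(f,g)(x+α) = Sres_d(f(x+α), g(x+α))(x)`. -/
theorem sres_comp_translation {K : Type*} [Field K] (m n d : ℕ) (f g : K[X]) (α : K)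
    (hf : f.natDegree = m) (hg : g.natDegree = n) (hdm : d < m) (hdn : d < n) :
    (Sres m n d f g).comp (X + C α) =
      Sres m n d (f.comp (X + C α)) (g.comp (X + C α)) := by
  simp only [← taylor_apply, Sres, sresMatrix_eq_coeffMatrix m n d hdn.le]
  have hrows : (fun i => taylor α (sresRow m n d f g i)) =
      (sresRowOp m n d α).map C *ᵥ sresRow m n d (taylor α f) (taylor α g) :=
    funext (taylor_sresRow m n d hdm.le α f g)
  rw [taylor_det_coeffMatrix, ← det_coeffMatrix_taylor α (by omega) _ _
    (natDegree_sresRow_le m n d hf.le hg.le), hrows,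
    det_coeffMatrix_mulVec _ (sresRowOp_blockTriangular m n d α) (sresRowOp_self m n d α)]
end

section
/- Let K be a field, f, g ∈ K[x] of degrees m and n respectively, and 0 ≤ d < min(m,n). Assume the d-th principal subresultant PSres_d(f,g) is nonzero. If F, G ∈ K[x] satisfy deg F < n-d, deg G < m-d, and h = F·f + G·g is a nonzero polynomial of degree at most d, then there exists a nonzero λ ∈ K with h = λ·Sres_d(f,g). -/
/-!
Only the last column of the subresultant matrix involves `x`: row `i` carries a polynomial `pᵢ`
(some `xᵏ f` or `xᵏ g`), and its constant entry in column `j` is the coefficient of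
`x^(m+n-d-1-j)` in `pᵢ`. Let `A` be the constant matrix with these entries, its last column holding
the coefficients of `x^d`. Laplace expansion along the last column `L` gives
`Sres_d = ∑ᵢ adj(A)_{L,i} pᵢ`, so `PSres_d = det A`. A combination `h = ∑ᵢ vᵢ pᵢ` of degree
at most `d` satisfies `v A = h_d e_L`, hence `det A · v = h_d · adj(A)_L`, i.e.
`det A · h = h_d · Sres_d`.
-/

open Polynomial Finset

namespace Matrix

variable {R : Type*} [CommRing R] {ι : Type*} [Fintype ι] [DecidableEq ι]

theorem det_updateCol_map_C (A : Matrix ι ι R) (p : ι → R[X]) (L : ι) :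
    ((A.map C).updateCol L p).det = ∑ i, C (A.adjugate L i) * p i := by
  rw [← cramer_apply, cramer_eq_adjugate_mulVec, ← RingHom.mapMatrix_apply, ← RingHom.map_adjugate]
  rfl

theorem coeff_det_updateCol_map_C (A : Matrix ι ι R) (p : ι → R[X]) (L : ι) (k : ℕ)
    (hA : ∀ i, A i L = (p i).coeff k) :
    (((A.map C).updateCol L p).det).coeff k = A.det := by
  simp only [det_updateCol_map_C, finsetSum_coeff, coeff_C_mul, ← hA]
  simpa [mul_apply] using congr_fun (congr_fun A.adjugate_mul L) L

theorem det_smul_eq_of_vecMul_apply_eq_zero (A : Matrix ι ι R) (v : ι → R) (L : ι)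
    (hv : ∀ j ≠ L, (v ᵥ* A) j = 0) : A.det • v = (v ᵥ* A) L • A.adjugate L := by
  have hsingle : v ᵥ* A = Pi.single L ((v ᵥ* A) L) := by
    ext j
    by_cases hj : j = L
    · subst hj; simp
    · simp [hj, hv j hj]
  calc A.det • v = v ᵥ* (A * A.adjugate) := by rw [mul_adjugate, vecMul_smul, vecMul_one]
    _ = (v ᵥ* A) L • A.adjugate L := by
      rw [← vecMul_vecMul, hsingle, single_vecMul, Pi.single_eq_same]; rfl

theorem C_det_mul_sum_eq (A : Matrix ι ι R) (p : ι → R[X]) (q : ι → ℕ) (L : ι)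
    (hA : ∀ i j, A i j = (p i).coeff (q j)) (v : ι → R)
    (hv : ∀ j ≠ L, (∑ i, C (v i) * p i).coeff (q j) = 0) :
    C A.det * ∑ i, C (v i) * p i =
      C ((∑ i, C (v i) * p i).coeff (q L)) * ((A.map C).updateCol L p).det := by
  have hvecMul : ∀ j, (v ᵥ* A) j = (∑ i, C (v i) * p i).coeff (q j) := by
    intro j
    simp [vecMul, dotProduct, hA]
  have hdet := det_smul_eq_of_vecMul_apply_eq_zero A v L fun j hj => (hvecMul j).trans (hv j hj)
  rw [hvecMul] at hdet
  rw [det_updateCol_map_C, mul_sum, mul_sum]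
  refine sum_congr rfl fun i _ => ?_
  rw [← mul_assoc, ← mul_assoc, ← C_mul, ← C_mul]
  exact congrArg (fun c => C c * p i) (congr_fun hdet i)

end Matrix

namespace Polynomial

variable {R : Type*} [Semiring R]

theorem mul_eq_sum_range_reflect {F : R[X]} {k : ℕ} (hF : F.degree < k) (f : R[X]) :
    F * f = ∑ i ∈ range k, C (F.coeff (k - 1 - i)) * (X ^ (k - 1 - i) * f) := by
  have hsum : F = ∑ i ∈ range k, C (F.coeff i) * X ^ i := by
    ext e
    simp only [finsetSum_coeff, coeff_C_mul_X_pow, sum_ite_eq, mem_range]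
    split_ifs with he
    · rfl
    · exact coeff_eq_zero_of_degree_lt (hF.trans_le (by exact_mod_cast not_lt.mp he))
  conv_lhs => rw [hsum, sum_mul]
  rw [← sum_range_reflect]
  exact sum_congr rfl fun i _ => mul_assoc _ _ _

end Polynomial

section Subresultant

variable {K : Type*} [Field K] (m n d : ℕ) (f g : K[X])

noncomputable def sresColumn (i : ℕ) : K[X] :=
  if i < n - d then X ^ (n - d - 1 - i) * f else X ^ (m - d - 1 - (i - (n - d))) * g

variable {m n d f g}

theorem sresMatrix_apply_last (i : Fin (m + n - 2 * d)) {L : Fin (m + n - 2 * d)}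
    (hL : (L : ℕ) = m + n - 2 * d - 1) : sresMatrix m n d f g i L = sresColumn m n d f g i := by
  simp only [sresMatrix, sresColumn, Matrix.of_apply, hL, if_true]

theorem sresMatrix_apply_of_ne_last (i : Fin (m + n - 2 * d)) {j : Fin (m + n - 2 * d)}
    (hj : (j : ℕ) ≠ m + n - 2 * d - 1) :
    sresMatrix m n d f g i j = C ((sresColumn m n d f g i).coeff (m + n - d - 1 - j)) := by
  have hjlt : (j : ℕ) < m + n - 2 * d - 1 := by omega
  have hilt : (i : ℕ) < m + n - 2 * d := i.2
  simp only [sresMatrix, sresColumn, Matrix.of_apply, if_neg hj]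
  split_ifs with hi hc hc
  · rw [coeff_X_pow_mul', if_pos (by omega)]
    congr 2
    omega
  · rw [coeff_X_pow_mul', if_neg (by omega), C_0]
  · rw [coeff_X_pow_mul', if_pos (by omega)]
    congr 2
    omega
  · rw [coeff_X_pow_mul', if_neg (by omega), C_0]

theorem sresMatrix_eq_updateCol {L : Fin (m + n - 2 * d)}
    (hL : (L : ℕ) = m + n - 2 * d - 1) :
    sresMatrix m n d f g =
      ((Matrix.of fun i j : Fin (m + n - 2 * d) =>
        (sresColumn m n d f g i).coeff (m + n - d - 1 - j)).map C).updateCol L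
        (fun i => sresColumn m n d f g i) := by
  refine Matrix.ext fun i j => ?_
  rw [Matrix.updateCol_apply]
  split_ifs with hj
  · rw [hj, sresMatrix_apply_last i hL]
  · exact sresMatrix_apply_of_ne_last (f := f) (g := g) i fun h => hj (Fin.ext (h.trans hL.symm))

theorem exists_sum_sresColumn_eq {F G : K[X]} (hF : F.degree < (n - d : ℕ))
    (hG : G.degree < (m - d : ℕ)) (hdm : d < m) (hdn : d < n) :
    ∃ v : Fin (m + n - 2 * d) → K, F * f + G * g = ∑ i, C (v i) * sresColumn m n d f g i := by
  refine ⟨fun i => if (i : ℕ) < n - d then F.coeff (n - d - 1 - i)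
    else G.coeff (m - d - 1 - (i - (n - d))), ?_⟩
  rw [Fin.sum_univ_eq_sum_range (fun i : ℕ => C (if i < n - d then F.coeff (n - d - 1 - i)
    else G.coeff (m - d - 1 - (i - (n - d)))) * sresColumn m n d f g i),
    show m + n - 2 * d = (n - d) + (m - d) by omega, sum_range_add,
    mul_eq_sum_range_reflect hF, mul_eq_sum_range_reflect hG]
  congr 1
  · refine sum_congr rfl fun i hi => ?_
    simp [sresColumn, mem_range.mp hi]
  · refine sum_congr rfl fun i hi => ?_
    simp [sresColumn]

end Subresultant

theorem combination_is_multiple_of_sres_general {K : Type*} [Field K] (m n d : ℕ) (f g : K[X])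
    (hdm : d < m) (hdn : d < n)
    (hps : PSres m n d f g ≠ 0) (F G : K[X])
    (hF : F.degree < (n - d : ℕ)) (hG : G.degree < (m - d : ℕ))
    (hne : F * f + G * g ≠ 0) (hdeg : (F * f + G * g).degree ≤ (d : ℕ)) :
    ∃ lam : K, lam ≠ 0 ∧ F * f + G * g = C lam * Sres m n d f g := by
  set N := m + n - 2 * d
  set L : Fin N := ⟨N - 1, by omega⟩
  set p : Fin N → K[X] := fun i => sresColumn m n d f g i
  set q : Fin N → ℕ := fun j => m + n - d - 1 - j
  set A : Matrix (Fin N) (Fin N) K := Matrix.of fun i j => (p i).coeff (q j)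
  have hM : sresMatrix m n d f g = (A.map C).updateCol L p := sresMatrix_eq_updateCol rfl
  have hqL : q L = d := by simp only [q, L]; omega
  have hdet : A.det ≠ 0 := by
    have hPSres := A.coeff_det_updateCol_map_C p L (q L) fun i => rfl
    rw [hqL, ← hM, ← Sres, ← PSres] at hPSres
    rwa [← hPSres]
  obtain ⟨v, hv⟩ := exists_sum_sresColumn_eq (f := f) (g := g) hF hG hdm hdn
  have hvanish : ∀ j ≠ L, (F * f + G * g).coeff (q j) = 0 := by
    intro j hj
    have hjL : (j : ℕ) ≠ N - 1 := fun h => hj (Fin.ext h)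
    have hdq : d < q j := by simp only [q]; omega
    exact coeff_eq_zero_of_degree_lt (hdeg.trans_lt (by exact_mod_cast hdq))
  have key := A.C_det_mul_sum_eq p q L (fun i j => rfl) v (by rwa [← hv])
  rw [← hv, ← hM, hqL, ← Sres] at key
  set c := (F * f + G * g).coeff d
  have hc : F * f + G * g = C (c / A.det) * Sres m n d f g := by
    rw [div_eq_mul_inv, mul_comm c, C_mul, mul_assoc, ← key, ← mul_assoc, ← C_mul,
      inv_mul_cancel₀ hdet, C_1, one_mul]
  refine ⟨c / A.det, fun h0 => hne ?_, hc⟩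
  rw [hc, h0, C_0, zero_mul]

/-- If `PSres_d(f,g) ≠ 0`, then any nonzero combination `F·f + G·g` of degree at most `d`
with `deg F < n-d` and `deg G < m-d` is a nonzero scalar multiple of `Sres_d(f,g)`. -/
theorem combination_is_multiple_of_sres {K : Type*} [Field K] (m n d : ℕ) (f g : K[X])
    (hf : f.natDegree = m) (hg : g.natDegree = n) (hdm : d < m) (hdn : d < n)
    (hps : PSres m n d f g ≠ 0) (F G : K[X])
    (hF : F.degree < (n - d : ℕ)) (hG : G.degree < (m - d : ℕ))
    (hne : F * f + G * g ≠ 0) (hdeg : (F * f + G * g).degree ≤ (d : ℕ)) :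
    ∃ lam : K, lam ≠ 0 ∧ F * f + G * g = C lam * Sres m n d f g :=
  combination_is_multiple_of_sres_general m n d f g hdm hdn hps F G hF hG hne hdeg
end

section
/- Let K be a field, m, n, d natural numbers with 0 ≤ d < min(m,n), c = m+n-2d-1, α, β ∈ K, and let q_j(m,n,d) ∈ ℤ (mapped into K) denote the maximal minors of the binomial Hankel matrix (C(c, m-i-j))_{1≤i≤d, 0≤j≤d}. Define h_d = (α-β)^c · ∑_{j=0}^{d} q_j(m,n,d)·(x-α)^j·(x-β)^(d-j). Then there exist polynomials F, G ∈ K[x] with deg F < n-d and deg G < m-d such that h_d = F·(x-α)^m + G·(x-β)^n. -/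
open Finset

open Polynomial

/-- Laplace expansion of a determinant with a repeated row gives the vanishing
of the signed sum of any row of `H` against the maximal minors `q_j`. -/
lemma det_row_sum (m n d : ℕ) (i : Fin d) :
    ∑ j : Fin (d+1), (-1 : ℤ)^(j:ℕ) * hankelH m n d i j * qMinor m n d j = 0 := by
  classical
  set M : Matrix (Fin (d+1)) (Fin (d+1)) ℤ :=
    Matrix.of (fun p => Fin.cases (hankelH m n d i) (fun p' => hankelH m n d p') p) with hM
  have hdet : M.det = 0 := by
    apply Matrix.det_zero_of_row_eq (i := (0 : Fin (d+1))) (j := i.succ) (Fin.succ_ne_zero i).symm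
    funext j
    simp [hM]
  rw [Matrix.det_succ_row_zero] at hdet
  rw [← hdet]
  refine Finset.sum_congr rfl fun j _ => ?_
  simp only [hM, Matrix.of_apply, Fin.cases_zero, Fin.cases_succ, qMinor,
    Matrix.submatrix, id]

/-- Degree bound for a constant times a product of powers of linear factors. -/
lemma deg3 {K : Type*} [Field K] (x α β : K) (p q : ℕ) :
    (C x * (X - C α)^p * (X - C β)^q).degree ≤ ((p + q : ℕ) : WithBot ℕ) := by
  have h1 : ((X - C α : K[X])^p).degree = (p : WithBot ℕ) := by
    rw [degree_pow, degree_X_sub_C]; simp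
  have h2 : ((X - C β : K[X])^q).degree = (q : WithBot ℕ) := by
    rw [degree_pow, degree_X_sub_C]; simp
  refine le_trans (degree_mul_le _ _) ?_
  refine le_trans (add_le_add (degree_mul_le _ _) le_rfl) ?_
  rw [h1, h2]
  refine le_trans (add_le_add (add_le_add degree_C_le le_rfl) le_rfl) ?_
  rw [zero_add]
  norm_cast

/-- Binomial expansion of `(α-β)^c` against the basis of products of powers of
`X - α` and `X - β`. -/
lemma expandC {K : Type*} [Field K] (c d : ℕ) (α β : K) (j : Fin (d+1)) :
    C ((α - β) ^ c) * ((X - C α)^(j:ℕ) * (X - C β)^(d - (j:ℕ))) =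
      ∑ k ∈ range (c+1), C ((((-1:ℤ)^k * (c.choose k) : ℤ) : K)) *
        (X - C α)^(k + (j:ℕ)) * (X - C β)^((c - k) + (d - (j:ℕ))) := by
  have hab : (C (α - β) : K[X]) = (-(X - C α)) + (X - C β) := by
    rw [map_sub]; ring
  rw [map_pow, hab, add_pow, Finset.sum_mul]
  refine Finset.sum_congr rfl fun k hk => ?_
  have hcoef : (C ((((-1:ℤ)^k * (c.choose k) : ℤ) : K)) : K[X]) =
      (-1)^k * (c.choose k : K[X]) := by
    push_cast
    rw [C_mul, C_pow, map_neg, map_one, C_eq_natCast]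
  rw [hcoef, neg_pow]
  ring

/-- The middle part of the expansion, reindexed by the rows of the Hankel matrix. -/
lemma mid_eq {K : Type*} [Field K] (m n d c : ℕ) (hc : c = m + n - 2 * d - 1)
    (hdm : d < m) (hdn : d < n) (α β : K) (j : Fin (d + 1)) :
    ∑ k ∈ (range (c+1)).filter
        (fun k => ¬ m ≤ k + (j:ℕ) ∧ ¬ n ≤ (c - k) + (d - (j:ℕ))),
      C ((((-1:ℤ)^k * (c.choose k) : ℤ) : K)) * (X - C α)^(k + (j:ℕ)) *
        (X - C β)^((c - k) + (d - (j:ℕ)))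
    = ∑ i ∈ range d,
      C (((binomZ c ((m:ℤ) - ((i:ℕ)+1) - (j:ℕ)) : ℤ) : K) * (-1:K)^(m + (i+1) + (j:ℕ))) *
        (X - C α)^(m - (i+1)) * (X - C β)^((n - d) + i) := by
  classical
  have hjd : (j:ℕ) ≤ d := Nat.lt_succ_iff.mp j.isLt
  have hshrink : ∑ i ∈ (range d).filter
        (fun i => i + 1 + (j:ℕ) ≤ m ∧ m ≤ c + (i+1) + (j:ℕ)),
      C (((binomZ c ((m:ℤ) - ((i:ℕ)+1) - (j:ℕ)) : ℤ) : K) * (-1:K)^(m + (i+1) + (j:ℕ))) *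
        (X - C α)^(m - (i+1)) * (X - C β)^((n - d) + i)
      = ∑ i ∈ range d,
      C (((binomZ c ((m:ℤ) - ((i:ℕ)+1) - (j:ℕ)) : ℤ) : K) * (-1:K)^(m + (i+1) + (j:ℕ))) *
        (X - C α)^(m - (i+1)) * (X - C β)^((n - d) + i) := by
    refine Finset.sum_filter_of_ne fun i hi hne => ?_
    by_contra hQ
    apply hne
    have hz : binomZ c ((m:ℤ) - ((i:ℕ)+1) - (j:ℕ)) = 0 := by
      rcases not_and_or.mp hQ with h1 | h1
      · unfold binomZ
        split_ifs with h
        · have : c < (((m:ℤ) - ((i:ℕ)+1) - (j:ℕ))).toNat := by omega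
          rw [Nat.choose_eq_zero_of_lt this]
          rfl
        · rfl
      · unfold binomZ
        split_ifs with h
        · have : c < (((m:ℤ) - ((i:ℕ)+1) - (j:ℕ))).toNat := by omega
          rw [Nat.choose_eq_zero_of_lt this]
          rfl
        · rfl
    rw [hz]
    simp
  rw [← hshrink]
  refine Finset.sum_nbij' (fun k => m - k - (j:ℕ) - 1) (fun i => m - i - 1 - (j:ℕ))
    ?_ ?_ ?_ ?_ ?_
  · intro k hk
    simp only [mem_filter, mem_range] at hk ⊢
    omega
  · intro i hi
    simp only [mem_filter, mem_range] at hi ⊢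
    omega
  · intro k hk
    simp only [mem_filter, mem_range] at hk
    show m - (m - k - (j:ℕ) - 1) - 1 - (j:ℕ) = k
    omega
  · intro i hi
    simp only [mem_filter, mem_range] at hi
    show m - (m - i - 1 - (j:ℕ)) - (j:ℕ) - 1 = i
    omega
  · intro k hk
    simp only [mem_filter, mem_range] at hk
    obtain ⟨hk1, hk2, hk3⟩ := hk
    have e0 : (m:ℤ) - ((m - k - (j:ℕ) - 1 : ℕ) + 1) - (j:ℕ) = (k:ℤ) := by
      push_cast
      omega
    have e1 : binomZ c ((m:ℤ) - ((m - k - (j:ℕ) - 1 : ℕ) + 1) - (j:ℕ))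
        = (c.choose k : ℤ) := by
      rw [e0]
      simp [binomZ]
    have e2 : m - (m - k - (j:ℕ) - 1 + 1) = k + (j:ℕ) := by omega
    have e3 : (n - d) + (m - k - (j:ℕ) - 1) = (c - k) + (d - (j:ℕ)) := by omega
    have e4 : (-1:K)^(m + (m - k - (j:ℕ) - 1 + 1) + (j:ℕ)) = (-1:K)^k := by
      rw [show m + (m - k - (j:ℕ) - 1 + 1) + (j:ℕ)
            = k + 2 * (m - k) from by omega,
        pow_add, pow_mul]
      simp
    rw [e1, e2, e3, e4]
    push_cast
    ring

/-- The middle parts, summed against the minors `q_j`, vanish. -/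
lemma mid_vanish {K : Type*} [Field K] (m n d c : ℕ) (hc : c = m + n - 2 * d - 1)
    (α β : K) :
    ∑ j : Fin (d+1), C ((qMinor m n d j : ℤ) : K) * ∑ i ∈ range d,
      C (((binomZ c ((m:ℤ) - ((i:ℕ)+1) - (j:ℕ)) : ℤ) : K) * (-1:K)^(m + (i+1) + (j:ℕ))) *
        (X - C α)^(m - (i+1)) * (X - C β)^((n - d) + i) = 0 := by
  classical
  subst hc
  have hfin : ∀ j : Fin (d+1),
      ∑ i ∈ range d,
        C (((binomZ (m + n - 2*d - 1) ((m:ℤ) - ((i:ℕ)+1) - (j:ℕ)) : ℤ) : K)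
            * (-1:K)^(m + (i+1) + (j:ℕ))) *
          (X - C α)^(m - (i+1)) * (X - C β)^((n - d) + i)
      = ∑ i : Fin d,
        C (((hankelH m n d i j : ℤ) : K) * (-1:K)^(m + ((i:ℕ)+1) + (j:ℕ))) *
          (X - C α)^(m - ((i:ℕ)+1)) * (X - C β)^((n - d) + (i:ℕ)) := by
    intro j
    exact (Fin.sum_univ_eq_sum_range (fun i =>
      C (((binomZ (m + n - 2*d - 1) ((m:ℤ) - ((i:ℕ)+1) - (j:ℕ)) : ℤ) : K)
          * (-1:K)^(m + (i+1) + (j:ℕ))) *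
        (X - C α)^(m - (i+1)) * (X - C β)^((n - d) + i)) d).symm
  calc ∑ j : Fin (d+1), C ((qMinor m n d j : ℤ) : K) * ∑ i ∈ range d,
        C (((binomZ (m + n - 2*d - 1) ((m:ℤ) - ((i:ℕ)+1) - (j:ℕ)) : ℤ) : K)
            * (-1:K)^(m + (i+1) + (j:ℕ))) *
          (X - C α)^(m - (i+1)) * (X - C β)^((n - d) + i)
      = ∑ j : Fin (d+1), ∑ i : Fin d,
        C ((qMinor m n d j : ℤ) : K) *
          (C (((hankelH m n d i j : ℤ) : K) * (-1:K)^(m + ((i:ℕ)+1) + (j:ℕ))) *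
            (X - C α)^(m - ((i:ℕ)+1)) * (X - C β)^((n - d) + (i:ℕ))) := by
        refine Finset.sum_congr rfl fun j _ => ?_
        rw [hfin j, Finset.mul_sum]
    _ = ∑ i : Fin d, ∑ j : Fin (d+1),
        C ((qMinor m n d j : ℤ) : K) *
          (C (((hankelH m n d i j : ℤ) : K) * (-1:K)^(m + ((i:ℕ)+1) + (j:ℕ))) *
            (X - C α)^(m - ((i:ℕ)+1)) * (X - C β)^((n - d) + (i:ℕ))) :=
        Finset.sum_comm
    _ = 0 := by
        refine Finset.sum_eq_zero fun i _ => ?_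
        have h0 : ((∑ j : Fin (d+1),
            (-1 : ℤ)^(j:ℕ) * hankelH m n d i j * qMinor m n d j : ℤ) : K) = 0 := by
          rw [det_row_sum]; exact Int.cast_zero
        push_cast at h0
        have key : ∑ j : Fin (d+1), ((qMinor m n d j : ℤ) : K) *
            ((hankelH m n d i j : ℤ) : K) * (-1:K)^(m + ((i:ℕ)+1) + (j:ℕ)) = 0 := by
          calc ∑ j : Fin (d+1), ((qMinor m n d j : ℤ) : K) *
              ((hankelH m n d i j : ℤ) : K) * (-1:K)^(m + ((i:ℕ)+1) + (j:ℕ))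
              = (-1:K)^(m + ((i:ℕ)+1)) * ∑ j : Fin (d+1),
                (-1:K)^(j:ℕ) * ((hankelH m n d i j : ℤ) : K) * ((qMinor m n d j : ℤ) : K) := by
                rw [Finset.mul_sum]
                refine Finset.sum_congr rfl fun j _ => ?_
                rw [pow_add]
                ring
            _ = 0 := by rw [h0, mul_zero]
        calc ∑ j : Fin (d+1), C ((qMinor m n d j : ℤ) : K) *
              (C (((hankelH m n d i j : ℤ) : K) * (-1:K)^(m + ((i:ℕ)+1) + (j:ℕ))) *
                (X - C α)^(m - ((i:ℕ)+1)) * (X - C β)^((n - d) + (i:ℕ)))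
            = (∑ j : Fin (d+1), C (((qMinor m n d j : ℤ) : K) *
                (((hankelH m n d i j : ℤ) : K) * (-1:K)^(m + ((i:ℕ)+1) + (j:ℕ))))) *
                ((X - C α)^(m - ((i:ℕ)+1)) * (X - C β)^((n - d) + (i:ℕ))) := by
              rw [Finset.sum_mul]
              refine Finset.sum_congr rfl fun j _ => ?_
              have assoc : ∀ (x y z w : K[X]), x * (y * z * w) = x * y * (z * w) :=
                fun x y z w => by ring
              rw [assoc, ← C_mul]
          _ = 0 := by
              rw [← map_sum]
              have : ∑ j : Fin (d+1), ((qMinor m n d j : ℤ) : K) *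
                  (((hankelH m n d i j : ℤ) : K) * (-1:K)^(m + ((i:ℕ)+1) + (j:ℕ)))
                  = ∑ j : Fin (d+1), ((qMinor m n d j : ℤ) : K) *
                  ((hankelH m n d i j : ℤ) : K) * (-1:K)^(m + ((i:ℕ)+1) + (j:ℕ)) := by
                refine Finset.sum_congr rfl fun j _ => by ring
              rw [this, key]
              simp

/-- The polynomial `h_d = (α-β)^c · ∑_j q_j(m,n,d)(x-α)^j(x-β)^(d-j) ` can be written as
`F·(x-α)^m + G·(x-β)^n` with `deg F < n-d` and `deg G < m-d`. -/
theorem h_d_is_combination {K : Type*} [Field K] (m n d : ℕ) (hdm : d < m) (hdn : d < n)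
    (α β : K) :
    ∃ F G : K[X], F.degree < (n - d : ℕ) ∧ G.degree < (m - d : ℕ) ∧
      C ((α - β) ^ (m + n - 2 * d - 1)) *
          ∑ j : Fin (d + 1),
            C (((qMinor m n d j : ℤ) : K)) * (X - C α) ^ (j : ℕ) *
              (X - C β) ^ (d - (j : ℕ)) =
        F * (X - C α) ^ m + G * (X - C β) ^ n := by
  classical
  set c := m + n - 2 * d - 1 with hc
  refine ⟨∑ j : Fin (d + 1), C ((qMinor m n d j : ℤ) : K) *
      ∑ k ∈ (range (c+1)).filter (fun k => m ≤ k + (j:ℕ)),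
        C ((((-1:ℤ)^k * (c.choose k) : ℤ) : K)) * (X - C α)^(k + (j:ℕ) - m) *
          (X - C β)^((c - k) + (d - (j:ℕ))),
    ∑ j : Fin (d + 1), C ((qMinor m n d j : ℤ) : K) *
      ∑ k ∈ (range (c+1)).filter (fun k => ¬ m ≤ k + (j:ℕ) ∧ n ≤ (c - k) + (d - (j:ℕ))),
        C ((((-1:ℤ)^k * (c.choose k) : ℤ) : K)) * (X - C α)^(k + (j:ℕ)) *
          (X - C β)^((c - k) + (d - (j:ℕ)) - n),
    ?_, ?_, ?_⟩
  · -- degree of F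
    refine lt_of_le_of_lt (degree_sum_le _ _) ?_
    rw [Finset.sup_lt_iff (WithBot.bot_lt_coe _)]
    intro j _
    have hinner : (∑ k ∈ (range (c+1)).filter (fun k => m ≤ k + (j:ℕ)),
        C ((((-1:ℤ)^k * (c.choose k) : ℤ) : K)) * (X - C α)^(k + (j:ℕ) - m) *
          (X - C β)^((c - k) + (d - (j:ℕ)))).degree ≤ ((n - d - 1 : ℕ) : WithBot ℕ) := by
      refine le_trans (degree_sum_le _ _) ?_
      refine Finset.sup_le fun k hk => ?_
      simp only [mem_filter, mem_range] at hk
      refine le_trans (deg3 _ _ _ _ _) ?_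
      have hjd : (j:ℕ) ≤ d := Nat.lt_succ_iff.mp j.isLt
      have : (k + (j:ℕ) - m) + ((c - k) + (d - (j:ℕ))) = n - d - 1 := by omega
      rw [this]
    calc (C ((qMinor m n d j : ℤ) : K) *
        ∑ k ∈ (range (c+1)).filter (fun k => m ≤ k + (j:ℕ)),
          C ((((-1:ℤ)^k * (c.choose k) : ℤ) : K)) * (X - C α)^(k + (j:ℕ) - m) *
            (X - C β)^((c - k) + (d - (j:ℕ)))).degree
        ≤ (C ((qMinor m n d j : ℤ) : K)).degree +
          (∑ k ∈ (range (c+1)).filter (fun k => m ≤ k + (j:ℕ)),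
          C ((((-1:ℤ)^k * (c.choose k) : ℤ) : K)) * (X - C α)^(k + (j:ℕ) - m) *
            (X - C β)^((c - k) + (d - (j:ℕ)))).degree := degree_mul_le _ _
      _ ≤ 0 + ((n - d - 1 : ℕ) : WithBot ℕ) := add_le_add degree_C_le hinner
      _ = ((n - d - 1 : ℕ) : WithBot ℕ) := zero_add _
      _ < ((n - d : ℕ) : WithBot ℕ) := by
          exact_mod_cast (show n - d - 1 < n - d from by omega)
  · -- degree of G
    refine lt_of_le_of_lt (degree_sum_le _ _) ?_
    rw [Finset.sup_lt_iff (WithBot.bot_lt_coe _)]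
    intro j _
    have hinner : (∑ k ∈ (range (c+1)).filter
          (fun k => ¬ m ≤ k + (j:ℕ) ∧ n ≤ (c - k) + (d - (j:ℕ))),
        C ((((-1:ℤ)^k * (c.choose k) : ℤ) : K)) * (X - C α)^(k + (j:ℕ)) *
          (X - C β)^((c - k) + (d - (j:ℕ)) - n)).degree ≤ ((m - d - 1 : ℕ) : WithBot ℕ) := by
      refine le_trans (degree_sum_le _ _) ?_
      refine Finset.sup_le fun k hk => ?_
      simp only [mem_filter, mem_range] at hk
      refine le_trans (deg3 _ _ _ _ _) ?_
      have hjd : (j:ℕ) ≤ d := Nat.lt_succ_iff.mp j.isLt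
      have : (k + (j:ℕ)) + ((c - k) + (d - (j:ℕ)) - n) = m - d - 1 := by omega
      rw [this]
    calc (C ((qMinor m n d j : ℤ) : K) *
        ∑ k ∈ (range (c+1)).filter
            (fun k => ¬ m ≤ k + (j:ℕ) ∧ n ≤ (c - k) + (d - (j:ℕ))),
          C ((((-1:ℤ)^k * (c.choose k) : ℤ) : K)) * (X - C α)^(k + (j:ℕ)) *
            (X - C β)^((c - k) + (d - (j:ℕ)) - n)).degree
        ≤ (C ((qMinor m n d j : ℤ) : K)).degree +
          (∑ k ∈ (range (c+1)).filter
              (fun k => ¬ m ≤ k + (j:ℕ) ∧ n ≤ (c - k) + (d - (j:ℕ))),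
          C ((((-1:ℤ)^k * (c.choose k) : ℤ) : K)) * (X - C α)^(k + (j:ℕ)) *
            (X - C β)^((c - k) + (d - (j:ℕ)) - n)).degree := degree_mul_le _ _
      _ ≤ 0 + ((m - d - 1 : ℕ) : WithBot ℕ) := add_le_add degree_C_le hinner
      _ = ((m - d - 1 : ℕ) : WithBot ℕ) := zero_add _
      _ < ((m - d : ℕ) : WithBot ℕ) := by
          exact_mod_cast (show m - d - 1 < m - d from by omega)
  · -- main identity
    have split3 : ∀ j : Fin (d+1),
        ∑ k ∈ range (c+1), C ((((-1:ℤ)^k * (c.choose k) : ℤ) : K)) *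
            (X - C α)^(k + (j:ℕ)) * (X - C β)^((c - k) + (d - (j:ℕ)))
        = (∑ k ∈ (range (c+1)).filter (fun k => m ≤ k + (j:ℕ)),
            C ((((-1:ℤ)^k * (c.choose k) : ℤ) : K)) * (X - C α)^(k + (j:ℕ)) *
              (X - C β)^((c - k) + (d - (j:ℕ))))
          + (∑ k ∈ (range (c+1)).filter
                (fun k => ¬ m ≤ k + (j:ℕ) ∧ n ≤ (c - k) + (d - (j:ℕ))),
            C ((((-1:ℤ)^k * (c.choose k) : ℤ) : K)) * (X - C α)^(k + (j:ℕ)) *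
              (X - C β)^((c - k) + (d - (j:ℕ))))
          + (∑ k ∈ (range (c+1)).filter
                (fun k => ¬ m ≤ k + (j:ℕ) ∧ ¬ n ≤ (c - k) + (d - (j:ℕ))),
            C ((((-1:ℤ)^k * (c.choose k) : ℤ) : K)) * (X - C α)^(k + (j:ℕ)) *
              (X - C β)^((c - k) + (d - (j:ℕ)))) := by
      intro j
      rw [← Finset.sum_filter_add_sum_filter_not (range (c+1))
            (fun k => m ≤ k + (j:ℕ))
            (fun k => C ((((-1:ℤ)^k * (c.choose k) : ℤ) : K)) * (X - C α)^(k + (j:ℕ)) *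
              (X - C β)^((c - k) + (d - (j:ℕ))))]
      rw [← Finset.sum_filter_add_sum_filter_not
            ((range (c+1)).filter (fun k => ¬ m ≤ k + (j:ℕ)))
            (fun k => n ≤ (c - k) + (d - (j:ℕ)))
            (fun k => C ((((-1:ℤ)^k * (c.choose k) : ℤ) : K)) * (X - C α)^(k + (j:ℕ)) *
              (X - C β)^((c - k) + (d - (j:ℕ))))]
      rw [Finset.filter_filter, Finset.filter_filter, add_assoc]
    have extractA : ∀ j : Fin (d+1),
        ∑ k ∈ (range (c+1)).filter (fun k => m ≤ k + (j:ℕ)),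
            C ((((-1:ℤ)^k * (c.choose k) : ℤ) : K)) * (X - C α)^(k + (j:ℕ)) *
              (X - C β)^((c - k) + (d - (j:ℕ)))
        = (∑ k ∈ (range (c+1)).filter (fun k => m ≤ k + (j:ℕ)),
            C ((((-1:ℤ)^k * (c.choose k) : ℤ) : K)) * (X - C α)^(k + (j:ℕ) - m) *
              (X - C β)^((c - k) + (d - (j:ℕ)))) * (X - C α)^m := by
      intro j
      rw [Finset.sum_mul]
      refine Finset.sum_congr rfl fun k hk => ?_
      simp only [mem_filter, mem_range] at hk
      conv_lhs => rw [show k + (j:ℕ) = (k + (j:ℕ) - m) + m from by omega, pow_add]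
      ring
    have extractB : ∀ j : Fin (d+1),
        ∑ k ∈ (range (c+1)).filter (fun k => ¬ m ≤ k + (j:ℕ) ∧ n ≤ (c - k) + (d - (j:ℕ))),
            C ((((-1:ℤ)^k * (c.choose k) : ℤ) : K)) * (X - C α)^(k + (j:ℕ)) *
              (X - C β)^((c - k) + (d - (j:ℕ)))
        = (∑ k ∈ (range (c+1)).filter
              (fun k => ¬ m ≤ k + (j:ℕ) ∧ n ≤ (c - k) + (d - (j:ℕ))),
            C ((((-1:ℤ)^k * (c.choose k) : ℤ) : K)) * (X - C α)^(k + (j:ℕ)) *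
              (X - C β)^((c - k) + (d - (j:ℕ)) - n)) * (X - C β)^n := by
      intro j
      rw [Finset.sum_mul]
      refine Finset.sum_congr rfl fun k hk => ?_
      simp only [mem_filter, mem_range] at hk
      conv_lhs => rw [show (c - k) + (d - (j:ℕ)) = ((c - k) + (d - (j:ℕ)) - n) + n
        from by omega, pow_add]
      ring
    have midzero : ∑ j : Fin (d+1), C ((qMinor m n d j : ℤ) : K) *
        ∑ k ∈ (range (c+1)).filter
            (fun k => ¬ m ≤ k + (j:ℕ) ∧ ¬ n ≤ (c - k) + (d - (j:ℕ))),
          C ((((-1:ℤ)^k * (c.choose k) : ℤ) : K)) * (X - C α)^(k + (j:ℕ)) *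
            (X - C β)^((c - k) + (d - (j:ℕ))) = 0 := by
      have := mid_vanish m n d c hc α β
      rw [← this]
      refine Finset.sum_congr rfl fun j _ => ?_
      rw [mid_eq m n d c hc hdm hdn α β j]
    calc C ((α - β) ^ c) * ∑ j : Fin (d + 1),
          C (((qMinor m n d j : ℤ) : K)) * (X - C α) ^ (j : ℕ) * (X - C β) ^ (d - (j : ℕ))
        = ∑ j : Fin (d + 1), C ((qMinor m n d j : ℤ) : K) *
            (C ((α - β) ^ c) * ((X - C α)^(j:ℕ) * (X - C β)^(d - (j:ℕ)))) := by
          rw [Finset.mul_sum]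
          exact Finset.sum_congr rfl fun j _ => by ring
      _ = ∑ j : Fin (d + 1), C ((qMinor m n d j : ℤ) : K) *
            ((∑ k ∈ (range (c+1)).filter (fun k => m ≤ k + (j:ℕ)),
              C ((((-1:ℤ)^k * (c.choose k) : ℤ) : K)) * (X - C α)^(k + (j:ℕ) - m) *
                (X - C β)^((c - k) + (d - (j:ℕ)))) * (X - C α)^m
            + (∑ k ∈ (range (c+1)).filter
                  (fun k => ¬ m ≤ k + (j:ℕ) ∧ n ≤ (c - k) + (d - (j:ℕ))),
              C ((((-1:ℤ)^k * (c.choose k) : ℤ) : K)) * (X - C α)^(k + (j:ℕ)) *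
                (X - C β)^((c - k) + (d - (j:ℕ)) - n)) * (X - C β)^n
            + ∑ k ∈ (range (c+1)).filter
                  (fun k => ¬ m ≤ k + (j:ℕ) ∧ ¬ n ≤ (c - k) + (d - (j:ℕ))),
              C ((((-1:ℤ)^k * (c.choose k) : ℤ) : K)) * (X - C α)^(k + (j:ℕ)) *
                (X - C β)^((c - k) + (d - (j:ℕ)))) := by
          refine Finset.sum_congr rfl fun j _ => ?_
          rw [expandC c d α β j, split3 j, extractA j, extractB j]
      _ = (∑ j : Fin (d + 1), C ((qMinor m n d j : ℤ) : K) *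
            ∑ k ∈ (range (c+1)).filter (fun k => m ≤ k + (j:ℕ)),
              C ((((-1:ℤ)^k * (c.choose k) : ℤ) : K)) * (X - C α)^(k + (j:ℕ) - m) *
                (X - C β)^((c - k) + (d - (j:ℕ)))) * (X - C α)^m
          + (∑ j : Fin (d + 1), C ((qMinor m n d j : ℤ) : K) *
            ∑ k ∈ (range (c+1)).filter
                (fun k => ¬ m ≤ k + (j:ℕ) ∧ n ≤ (c - k) + (d - (j:ℕ))),
              C ((((-1:ℤ)^k * (c.choose k) : ℤ) : K)) * (X - C α)^(k + (j:ℕ)) *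
                (X - C β)^((c - k) + (d - (j:ℕ)) - n)) * (X - C β)^n
          + ∑ j : Fin (d + 1), C ((qMinor m n d j : ℤ) : K) *
            ∑ k ∈ (range (c+1)).filter
                (fun k => ¬ m ≤ k + (j:ℕ) ∧ ¬ n ≤ (c - k) + (d - (j:ℕ))),
              C ((((-1:ℤ)^k * (c.choose k) : ℤ) : K)) * (X - C α)^(k + (j:ℕ)) *
                (X - C β)^((c - k) + (d - (j:ℕ))) := by
          rw [Finset.sum_mul, Finset.sum_mul, ← Finset.sum_add_distrib,
            ← Finset.sum_add_distrib]
          refine Finset.sum_congr rfl fun j _ => ?_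
          ring
      _ = _ := by rw [midzero, add_zero]
end

section
/- Let K be a field with char(K) = 0 or char(K) ≥ m+n-d, let m, n, d be natural numbers with 0 < d < min(m,n), and let α ≠ β be elements of K. Then the order-d subresultant Sres_d((x-α)^m, (x-β)^n) is a polynomial of degree exactly d. -/
open Polynomial Finset

namespace SresAux
variable {K : Type*} [Field K]

noncomputable def phi (c : ℕ) (p : K[X]) : K[X] := X * derivative p - C (c : K) * p

noncomputable def Phi : ℕ → K[X] → K[X]
  | 0, p => p
  | (t+1), p => phi t (Phi t p)

lemma coeff_X_mul_derivative (p : K[X]) (s : ℕ) :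
    (X * derivative p).coeff s = (s : K) * p.coeff s := by
  cases s with
  | zero => simp [Polynomial.mul_coeff_zero]
  | succ t => rw [coeff_X_mul, coeff_derivative]; push_cast; ring

lemma coeff_phi (c : ℕ) (p : K[X]) (s : ℕ) :
    (phi c p).coeff s = ((s : K) - (c : K)) * p.coeff s := by
  rw [phi, coeff_sub, coeff_X_mul_derivative, coeff_C_mul]; ring

lemma coeff_Phi (t : ℕ) (p : K[X]) (s : ℕ) :
    (Phi t p).coeff s = (∏ c ∈ range t, ((s : K) - (c : K))) * p.coeff s := by
  induction t with
  | zero => simp [Phi]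
  | succ t ih => rw [Phi, coeff_phi, ih, prod_range_succ]; ring

lemma dvd_phi (c : ℕ) (γ : K) (t : ℕ) (p : K[X]) (h : (X - C γ) ^ (t+1) ∣ p) :
    (X - C γ) ^ t ∣ phi c p := by
  obtain ⟨q, rfl⟩ := h
  refine ⟨C ((t:K)+1) * X * q + (X - C γ) * (X * derivative q - C (c : K) * q), ?_⟩
  rw [phi, derivative_mul, derivative_pow, derivative_sub, derivative_X, derivative_C]
  push_cast
  ring

lemma dvd_Phi (γ : K) (t u : ℕ) (p : K[X]) (h : (X - C γ) ^ (t + u) ∣ p) :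
    (X - C γ) ^ t ∣ Phi u p := by
  induction u generalizing t with
  | zero => simpa [Phi] using h
  | succ u ih =>
      have := ih (t + 1) (by convert h using 2; omega)
      exact dvd_phi u γ t _ this

/-- The gap lemma: if `v·(x-γ)^n` has no coefficients in degrees `[d, m)`,
`deg v ≤ m-d-1`, `γ ≠ 0`, then `v = 0`. -/
lemma gap_lemma (m n d : ℕ) (hd : 0 < d) (hdm : d < m) (hdn : d < n)
    (hch : ∀ j : ℕ, 0 < j → j < m + n - d → (j : K) ≠ 0)
    (γ : K) (hγ : γ ≠ 0) (v : K[X]) (hv : v.natDegree ≤ m - d - 1)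
    (hcoeff : ∀ s, d ≤ s → s < m → (v * (X - C γ) ^ n).coeff s = 0) : v = 0 := by
  by_contra hv0
  set h : K[X] := v * (X - C γ) ^ n with hh
  have hXγ : (X - C γ : K[X]) ≠ 0 := X_sub_C_ne_zero γ
  have hdegh : h.natDegree = v.natDegree + n := by
    rw [hh, natDegree_mul hv0 (pow_ne_zero _ hXγ), natDegree_pow, natDegree_X_sub_C, mul_one]
  have hdegh' : h.natDegree ≤ m + n - d - 1 := by omega
  set H : K[X] := Phi d h with hH
  have hHlow : ∀ s, s < m → H.coeff s = 0 := by
    intro s hs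
    rw [hH, coeff_Phi]
    by_cases hsd : s < d
    · rw [Finset.prod_eq_zero (Finset.mem_range.mpr hsd) (by simp), zero_mul]
    · rw [hcoeff s (by omega) hs, mul_zero]
  have hHhigh : ∀ s, m + n - d - 1 < s → H.coeff s = 0 := by
    intro s hs
    rw [hH, coeff_Phi, coeff_eq_zero_of_natDegree_lt (by omega), mul_zero]
  obtain ⟨r, hr⟩ : (X : K[X]) ^ m ∣ H := X_pow_dvd_iff.mpr (fun s hs => hHlow s hs)
  have hcop : IsCoprime ((X - C γ : K[X]) ^ (n - d)) ((X : K[X]) ^ m) := by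
    refine IsCoprime.pow ?_
    refine ⟨-C γ⁻¹, C γ⁻¹, ?_⟩
    have : (-C γ⁻¹ : K[X]) * (X - C γ) + C γ⁻¹ * X = C (γ⁻¹ * γ) := by
      rw [C_mul]; ring
    rw [this, inv_mul_cancel₀ hγ, C_1]
  have hdvdH : (X - C γ : K[X]) ^ (n - d) ∣ H := by
    refine dvd_Phi γ (n - d) d h ?_
    have : (n - d) + d = n := by omega
    rw [this, hh]
    exact Dvd.intro_left v rfl
  have hrdvd : (X - C γ : K[X]) ^ (n - d) ∣ r := hcop.dvd_of_dvd_mul_left (hr ▸ hdvdH)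
  have hr0 : r = 0 := by
    by_contra hr0
    have h1 : (n - d : ℕ) ≤ r.natDegree := by
      have := natDegree_le_of_dvd hrdvd hr0
      rwa [natDegree_pow, natDegree_X_sub_C, mul_one] at this
    have h2 : H.natDegree = m + r.natDegree := by
      rw [hr, natDegree_mul (pow_ne_zero _ X_ne_zero) hr0, natDegree_X_pow]
    have h3 : H.natDegree ≤ m + n - d - 1 :=
      natDegree_le_iff_coeff_eq_zero.mpr (fun N hN => hHhigh N hN)
    omega
  have hH0 : H = 0 := by rw [hr, hr0, mul_zero]
  set s0 := h.natDegree with hs0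
  have hne : h ≠ 0 := mul_ne_zero hv0 (pow_ne_zero _ hXγ)
  have hc : h.coeff s0 ≠ 0 := by
    rw [hs0]; exact leadingCoeff_ne_zero.mpr hne
  have hπ : (∏ c ∈ range d, ((s0 : K) - (c : K))) ≠ 0 := by
    rw [Finset.prod_ne_zero_iff]
    intro c hc'
    have hcd : c < d := Finset.mem_range.mp hc'
    have hcs : c ≤ s0 := by omega
    rw [← Nat.cast_sub hcs]
    exact hch (s0 - c) (by omega) (by omega)
  have : H.coeff s0 = 0 := by rw [hH0]; simp
  rw [hH, coeff_Phi] at this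
  exact (mul_ne_zero hπ hc) this

lemma taylor_eq_zero {r : K} {p : K[X]} (h : taylor r p = 0) : p = 0 := by
  have := congrArg (taylor (-r)) h
  rwa [taylor_taylor, neg_add_cancel, taylor_zero', LinearMap.id_apply, map_zero] at this

lemma taylor_pow (r : K) (p : K[X]) (k : ℕ) : taylor r (p ^ k) = (taylor r p) ^ k := by
  induction k with
  | zero => simp
  | succ k ih => rw [pow_succ, taylor_mul, ih, pow_succ]

lemma kernel_lemma (m n d : ℕ) (hd : 0 < d) (hdm : d < m) (hdn : d < n)
    (hch : ∀ j : ℕ, 0 < j → j < m + n - d → (j : K) ≠ 0)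
    (α β : K) (hab : α ≠ β)
    (u w : K[X]) (hu : u.natDegree ≤ n - d - 1) (hw : w.natDegree ≤ m - d - 1)
    (hlow : ∀ s, d ≤ s → (u * (X - C α) ^ m + w * (X - C β) ^ n).coeff s = 0) :
    u = 0 ∧ w = 0 := by
  set p : K[X] := u * (X - C α) ^ m + w * (X - C β) ^ n with hp
  have hpdeg : p.natDegree ≤ d - 1 :=
    natDegree_le_iff_coeff_eq_zero.mpr (fun N hN => hlow N (by omega))
  set γ := β - α with hγdef
  have hγ : γ ≠ 0 := sub_ne_zero.mpr (Ne.symm hab)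
  have ht1 : taylor α ((X : K[X]) - C α) = X := by
    rw [map_sub, taylor_X, taylor_C]; ring
  have ht2 : taylor α ((X : K[X]) - C β) = X - C γ := by
    rw [map_sub, taylor_X, taylor_C, hγdef, C_sub]; ring
  have htp : taylor α p = taylor α u * X ^ m + taylor α w * (X - C γ) ^ n := by
    rw [hp, map_add, taylor_mul, taylor_mul, taylor_pow, taylor_pow, ht1, ht2]
  have hcoeff : ∀ s, d ≤ s → s < m → (taylor α w * (X - C γ) ^ n).coeff s = 0 := by
    intro s hs1 hs2
    have h1 : (taylor α p).coeff s = 0 := by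
      apply coeff_eq_zero_of_natDegree_lt
      rw [natDegree_taylor]; omega
    have h2 : (taylor α u * X ^ m).coeff s = 0 := by
      rw [coeff_mul_X_pow']; simp [Nat.not_le.mpr hs2]
    have := htp ▸ h1
    rw [coeff_add, h2, zero_add] at this
    exact this
  have hw0 : taylor α w = 0 := by
    refine gap_lemma m n d hd hdm hdn hch γ hγ _ ?_ hcoeff
    rw [natDegree_taylor]; exact hw
  have hw0' : w = 0 := taylor_eq_zero hw0
  have hu0 : u = 0 := by
    by_contra hu0
    have hpu : p = u * (X - C α) ^ m := by rw [hp, hw0']; ring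
    have hdeg : p.natDegree = u.natDegree + m := by
      rw [hpu, natDegree_mul hu0 (pow_ne_zero _ (X_sub_C_ne_zero α)), natDegree_pow,
        natDegree_X_sub_C, mul_one]
    omega
  exact ⟨hu0, hw0'⟩

/-- coefficient of det of a polynomial matrix whose non-last columns are constants -/
lemma coeff_det {N : ℕ} (hN : 0 < N) (M : Matrix (Fin N) (Fin N) K[X])
    (hconst : ∀ i j : Fin N, (j : ℕ) ≠ N - 1 → ∃ c, M i j = C c) (k : ℕ) :
    M.det.coeff k
      = Matrix.det (Matrix.of fun i j => (M i j).coeff (if (j : ℕ) = N - 1 then k else 0)) := by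
  have hjl : N - 1 < N := by omega
  set jl : Fin N := ⟨N - 1, hjl⟩ with hjldef
  rw [Matrix.det_apply, Matrix.det_apply, Polynomial.finset_sum_coeff]
  refine Finset.sum_congr rfl (fun σ _ => ?_)
  rw [Units.smul_def, Units.smul_def, Polynomial.coeff_smul]
  congr 1
  rw [← Finset.prod_erase_mul _ _ (Finset.mem_univ jl),
    ← Finset.prod_erase_mul _ _ (Finset.mem_univ jl)]
  have hne : ∀ j : Fin N, j ∈ Finset.univ.erase jl → (j : ℕ) ≠ N - 1 := by
    intro j hj h
    exact (Finset.mem_erase.mp hj).1 (Fin.ext h)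
  have hC : (∏ j ∈ Finset.univ.erase jl, M (σ j) j)
      = C (∏ j ∈ Finset.univ.erase jl, (M (σ j) j).coeff 0) := by
    rw [map_prod]
    refine Finset.prod_congr rfl (fun j hj => ?_)
    obtain ⟨c, hc⟩ := hconst (σ j) j (hne j hj)
    rw [hc]; simp
  rw [hC, coeff_C_mul]
  congr 1
  · refine Finset.prod_congr rfl (fun j hj => ?_)
    rw [Matrix.of_apply, if_neg (hne j hj)]
  · rw [Matrix.of_apply, if_pos rfl]

/-- the polynomial carried by row `i` of the subresultant matrix -/
noncomputable def Prow (m n d : ℕ) (f g : K[X]) (i : Fin (m + n - 2 * d)) : K[X] :=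
  if (i : ℕ) < n - d then X ^ (n - d - 1 - (i : ℕ)) * f
  else X ^ (m - d - 1 - ((i : ℕ) - (n - d))) * g

/-- the coefficient matrix extracted at exponent `k` in the last column -/
noncomputable def Qmat (m n d : ℕ) (f g : K[X]) (k : ℕ) :
    Matrix (Fin (m + n - 2 * d)) (Fin (m + n - 2 * d)) K :=
  Matrix.of fun i j =>
    (sresMatrix m n d f g i j).coeff (if (j : ℕ) = m + n - 2 * d - 1 then k else 0)

lemma Qmat_eq (m n d : ℕ) (hd : 0 < d) (hdm : d < m) (hdn : d < n) (f g : K[X])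
    (i j : Fin (m + n - 2 * d)) :
    Qmat m n d f g d i j = (Prow m n d f g i).coeff (m + n - d - 1 - (j : ℕ)) := by
  obtain ⟨i, hiN⟩ := i
  obtain ⟨j, hjN⟩ := j
  simp only [Qmat, sresMatrix, Prow, Matrix.of_apply]
  by_cases hi : i < n - d
  · rw [if_pos hi, if_pos hi]
    by_cases hj : j = m + n - 2 * d - 1
    · rw [if_pos hj, if_pos hj]
      congr 1
      omega
    · rw [if_neg hj, if_neg hj, mul_comm, coeff_mul_X_pow']
      by_cases hji : j ≤ m + i
      · rw [if_pos hji, if_pos (by omega : n - d - 1 - i ≤ m + n - d - 1 - j), coeff_C_zero]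
        congr 1
        omega
      · rw [if_neg hji, if_neg (by omega : ¬ (n - d - 1 - i ≤ m + n - d - 1 - j))]
        exact coeff_zero 0
  · rw [if_neg hi, if_neg hi]
    by_cases hj : j = m + n - 2 * d - 1
    · rw [if_pos hj, if_pos hj]
      congr 1
      omega
    · rw [if_neg hj, if_neg hj, mul_comm, coeff_mul_X_pow']
      by_cases hji : j ≤ n + (i - (n - d))
      · rw [if_pos hji, if_pos (by omega : m - d - 1 - (i - (n - d)) ≤ m + n - d - 1 - j),
          coeff_C_zero]
        congr 1
        omega
      · rw [if_neg hji, if_neg (by omega : ¬ (m - d - 1 - (i - (n - d)) ≤ m + n - d - 1 - j))]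
        exact coeff_zero 0

lemma sresMatrix_const (m n d : ℕ) (f g : K[X]) (i j : Fin (m + n - 2 * d))
    (hj : (j : ℕ) ≠ m + n - 2 * d - 1) : ∃ c, sresMatrix m n d f g i j = C c := by
  simp only [sresMatrix, Matrix.of_apply]
  by_cases hi : (i : ℕ) < n - d
  · rw [if_pos hi, if_neg hj]
    by_cases hji : (j : ℕ) ≤ m + (i : ℕ)
    · exact ⟨_, by rw [if_pos hji]⟩
    · exact ⟨0, by rw [if_neg hji, C_0]⟩
  · rw [if_neg hi, if_neg hj]
    by_cases hji : (j : ℕ) ≤ n + ((i : ℕ) - (n - d))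
    · exact ⟨_, by rw [if_pos hji]⟩
    · exact ⟨0, by rw [if_neg hji, C_0]⟩

lemma sresMatrix_last (m n d : ℕ) (f g : K[X]) (hN : 0 < m + n - 2 * d)
    (i : Fin (m + n - 2 * d)) :
    sresMatrix m n d f g i ⟨m + n - 2 * d - 1, by omega⟩ = Prow m n d f g i := by
  simp only [sresMatrix, Prow, Matrix.of_apply]
  by_cases hi : (i : ℕ) < n - d
  · rw [if_pos hi, if_pos hi]; simp
  · rw [if_neg hi, if_neg hi]; simp

lemma Prow_natDegree (m n d : ℕ) (hdm : d < m) (hdn : d < n) (α β : K)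
    (i : Fin (m + n - 2 * d)) :
    (Prow m n d ((X - C α) ^ m) ((X - C β) ^ n) i).natDegree ≤ m + n - d - 1 := by
  have hf : ((X - C α : K[X]) ^ m).natDegree = m := by
    rw [natDegree_pow, natDegree_X_sub_C, mul_one]
  have hg : ((X - C β : K[X]) ^ n).natDegree = n := by
    rw [natDegree_pow, natDegree_X_sub_C, mul_one]
  rw [Prow]
  split_ifs with hi
  · refine le_trans natDegree_mul_le ?_
    rw [natDegree_X_pow, hf]; omega
  · refine le_trans natDegree_mul_le ?_
    rw [natDegree_X_pow, hg]; omega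

lemma det_Qmat_high (m n d : ℕ) (hd : 0 < d) (hdm : d < m) (hdn : d < n) (α β : K)
    (k : ℕ) (hk : d < k) :
    (Qmat m n d ((X - C α) ^ m) ((X - C β) ^ n) k).det = 0 := by
  have hN : 0 < m + n - 2 * d := by omega
  set f : K[X] := (X - C α) ^ m with hfdef
  set g : K[X] := (X - C β) ^ n with hgdef
  set jl : Fin (m + n - 2 * d) := ⟨m + n - 2 * d - 1, by omega⟩ with hjldef
  have hlast : ∀ i, Qmat m n d f g k i jl = (Prow m n d f g i).coeff k := by
    intro i
    show (sresMatrix m n d f g i jl).coeff (if ((jl : ℕ) = m + n - 2 * d - 1) then k else 0)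
      = _
    rw [if_pos rfl, sresMatrix_last m n d f g hN i]
  by_cases hkk : m + n - d - 1 < k
  · apply Matrix.det_eq_zero_of_column_eq_zero jl
    intro i
    rw [hlast i]
    exact coeff_eq_zero_of_natDegree_lt
      (lt_of_le_of_lt (Prow_natDegree m n d hdm hdn α β i) (by omega))
  · set j0 : Fin (m + n - 2 * d) := ⟨m + n - d - 1 - k, by omega⟩ with hj0def
    have hj0l : j0 ≠ jl := by
      intro h
      have := congrArg (Fin.val) h
      simp only [hj0def, hjldef] at this
      omega
    apply Matrix.det_zero_of_column_eq hj0l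
    intro i
    have h1 : Qmat m n d f g k i j0 = Qmat m n d f g d i j0 := by
      show (sresMatrix m n d f g i j0).coeff (if ((j0 : ℕ) = m + n - 2 * d - 1) then k else 0)
        = (sresMatrix m n d f g i j0).coeff (if ((j0 : ℕ) = m + n - 2 * d - 1) then d else 0)
      rw [if_neg (by show m + n - d - 1 - k ≠ m + n - 2 * d - 1; omega),
        if_neg (by show m + n - d - 1 - k ≠ m + n - 2 * d - 1; omega)]
    rw [h1, Qmat_eq m n d hd hdm hdn f g i j0, hlast i]
    congr 1
    show m + n - d - 1 - (m + n - d - 1 - k) = k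
    omega

lemma det_Qmat_ne (m n d : ℕ) (hd : 0 < d) (hdm : d < m) (hdn : d < n)
    (hch : ∀ j : ℕ, 0 < j → j < m + n - d → (j : K) ≠ 0)
    (α β : K) (hab : α ≠ β) :
    (Qmat m n d ((X - C α) ^ m) ((X - C β) ^ n) d).det ≠ 0 := by
  intro h0
  obtain ⟨v, hv0, hvM⟩ := Matrix.exists_vecMul_eq_zero_iff.mpr h0
  have hN : 0 < m + n - 2 * d := by omega
  set f : K[X] := (X - C α) ^ m with hfdef
  set g : K[X] := (X - C β) ^ n with hgdef
  set u : K[X] := ∑ i : Fin (m + n - 2 * d),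
    if (i : ℕ) < n - d then C (v i) * X ^ (n - d - 1 - (i : ℕ)) else 0 with hudef
  set w : K[X] := ∑ i : Fin (m + n - 2 * d),
    if (i : ℕ) < n - d then 0 else C (v i) * X ^ (m - d - 1 - ((i : ℕ) - (n - d))) with hwdef
  have hufwg : u * f + w * g
      = ∑ i : Fin (m + n - 2 * d), C (v i) * Prow m n d f g i := by
    rw [hudef, hwdef, Finset.sum_mul, Finset.sum_mul, ← Finset.sum_add_distrib]
    refine Finset.sum_congr rfl (fun i _ => ?_)
    rw [Prow]
    split_ifs with hi
    · rw [zero_mul, add_zero, mul_assoc]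
    · rw [zero_mul, zero_add, mul_assoc]
  have hcoeffsum : ∀ s, d ≤ s → (u * f + w * g).coeff s = 0 := by
    intro s hs
    rw [hufwg, finset_sum_coeff]
    by_cases hsN : s ≤ m + n - d - 1
    · set j : Fin (m + n - 2 * d) := ⟨m + n - d - 1 - s, by omega⟩ with hjdef
      have hj := congrFun hvM j
      simp only [Matrix.vecMul, dotProduct, Pi.zero_apply] at hj
      rw [← hj]
      refine Finset.sum_congr rfl (fun i _ => ?_)
      rw [coeff_C_mul, Qmat_eq m n d hd hdm hdn f g i j]
      have hidx : m + n - d - 1 - (j : ℕ) = s := by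
        show m + n - d - 1 - (m + n - d - 1 - s) = s
        omega
      rw [hidx]
    · refine Finset.sum_eq_zero (fun i _ => ?_)
      rw [coeff_C_mul, coeff_eq_zero_of_natDegree_lt
        (lt_of_le_of_lt (Prow_natDegree m n d hdm hdn α β i) (by omega)), mul_zero]
  have hudeg : u.natDegree ≤ n - d - 1 := by
    refine natDegree_sum_le_of_forall_le _ _ (fun i _ => ?_)
    split_ifs with hi
    · exact le_trans (natDegree_C_mul_le _ _) (by rw [natDegree_X_pow]; omega)
    · simp
  have hwdeg : w.natDegree ≤ m - d - 1 := by
    refine natDegree_sum_le_of_forall_le _ _ (fun i _ => ?_)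
    split_ifs with hi
    · simp
    · exact le_trans (natDegree_C_mul_le _ _) (by rw [natDegree_X_pow]; omega)
  obtain ⟨hu0, hw0⟩ := kernel_lemma m n d hd hdm hdn hch α β hab u w hudeg hwdeg hcoeffsum
  apply hv0
  funext i
  show v i = 0
  by_cases hi : (i : ℕ) < n - d
  · have hcoef : u.coeff (n - d - 1 - (i : ℕ)) = v i := by
      rw [hudef, finset_sum_coeff, Finset.sum_eq_single i]
      · rw [if_pos hi, coeff_C_mul, coeff_X_pow, if_pos rfl, mul_one]
      · intro b _ hbi
        have hbi' : (b : ℕ) ≠ (i : ℕ) := fun h => hbi (Fin.ext h)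
        by_cases hb : (b : ℕ) < n - d
        · rw [if_pos hb, coeff_C_mul, coeff_X_pow, if_neg (by omega), mul_zero]
        · rw [if_neg hb, coeff_zero]
      · intro h; exact absurd (Finset.mem_univ i) h
    rw [hu0, coeff_zero] at hcoef
    exact hcoef.symm
  · have hcoef : w.coeff (m - d - 1 - ((i : ℕ) - (n - d))) = v i := by
      rw [hwdef, finset_sum_coeff, Finset.sum_eq_single i]
      · rw [if_neg hi, coeff_C_mul, coeff_X_pow, if_pos rfl, mul_one]
      · intro b _ hbi
        have hbi' : (b : ℕ) ≠ (i : ℕ) := fun h => hbi (Fin.ext h)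
        have hbN : (b : ℕ) < m + n - 2 * d := b.isLt
        have hiN : (i : ℕ) < m + n - 2 * d := i.isLt
        by_cases hb : (b : ℕ) < n - d
        · rw [if_pos hb, coeff_zero]
        · rw [if_neg hb, coeff_C_mul, coeff_X_pow, if_neg (by omega), mul_zero]
      · intro h; exact absurd (Finset.mem_univ i) h
    rw [hw0, coeff_zero] at hcoef
    exact hcoef.symm

end SresAux


/-- If `char K = 0` or `char K ≥ m+n-d`, and `α ≠ β`, then the order-`d` subresultant of
`(x-α)^m` and `(x-β)^n` has degree exactly `d`. -/
theorem sres_degree_eq {K : Type*} [Field K] (m n d : ℕ) (hd : 0 < d) (hdm : d < m)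
    (hdn : d < n) (hchar : ∀ p : ℕ, CharP K p → p = 0 ∨ m + n - d ≤ p)
    (α β : K) (hab : α ≠ β) :
    (Sres m n d ((X - C α) ^ m) ((X - C β) ^ n)).degree = (d : ℕ) := by
  have hch : ∀ j : ℕ, 0 < j → j < m + n - d → (j : K) ≠ 0 := by
    intro j hj1 hj2 hj0
    have hp := ringChar.charP K
    rw [CharP.cast_eq_zero_iff K (ringChar K)] at hj0
    rcases hchar (ringChar K) hp with h0 | hge
    · rw [h0, zero_dvd_iff] at hj0; omega
    · have := Nat.le_of_dvd hj1 hj0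
      omega
  have hN : 0 < m + n - 2 * d := by omega
  set f : K[X] := (X - C α) ^ m with hfdef
  set g : K[X] := (X - C β) ^ n with hgdef
  have hcoeffdet : ∀ k, (Sres m n d f g).coeff k = (SresAux.Qmat m n d f g k).det := by
    intro k
    rw [Sres, SresAux.coeff_det hN _ (fun i j hj => SresAux.sresMatrix_const m n d f g i j hj) k]
    rfl
  apply degree_eq_of_le_of_coeff_ne_zero
  · rw [degree_le_iff_coeff_zero]
    intro s hs
    have hds : d < s := by exact_mod_cast hs
    rw [hcoeffdet s, SresAux.det_Qmat_high m n d hd hdm hdn α β s hds]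
  · rw [hcoeffdet d]
    exact SresAux.det_Qmat_ne m n d hd hdm hdn hch α β hab
end
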